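/- arXiv:2603.04080 — 9 statements merged into one kernel-verified Lean document; each statement's English description precedes it below -/
import Mathlib

section
/- Under the staggered difference-in-differences setup (consistency, no anticipation, parallel trends), for every g, t with 1 ≤ g ≤ t ≤ T and P(G = g) > 0, the group-period ATT is identified by observed data: τ_{g,t} = (1/P(G = g)) · ( E[1{G=g} (Y_t − Y_{g−1})] − Σ_{k=g}^{t} E[1{G=g} δ⁰_k(X_k)] ). -/
open MeasureTheory Finset Filter

namespace StaggeredDiD

/-- Staggered difference-in-differences setup: probability space, `T+1` periods,
group variable `G` with values in `{1, …, T+1}` (`T+1` = never treated),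
time-varying covariates `X t`, potential outcomes `Y g t` (initiating treatment in
period `g`, outcome in period `t`), no anticipation, and conditional parallel trends
with conditional-trend functions `δ0 t`. -/
structure Setup (Ω : Type*) [MeasurableSpace Ω] (𝒳 : Type*) [MeasurableSpace 𝒳] where
  μ : Measure Ω
  prob : IsProbabilityMeasure μ
  T : ℕ
  hT : 1 ≤ T
  G : Ω → ℕ
  measG : Measurable G
  rangeG : ∀ ω, 1 ≤ G ω ∧ G ω ≤ T + 1
  X : ℕ → Ω → 𝒳
  measX : ∀ t, Measurable (X t)
  Y : ℕ → ℕ → Ω → ℝ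
  measY : ∀ g t, Measurable (Y g t)
  intY : ∀ g t, Integrable (Y g t) μ
  noAnticipation : ∀ g t, t < g → Y g t =ᵐ[μ] Y (T + 1) t
  δ0 : ℕ → 𝒳 → ℝ
  measδ0 : ∀ t, Measurable (δ0 t)
  bddδ0 : ∀ t, ∃ C, ∀ x, |δ0 t x| ≤ C
  parallel : ∀ t, 1 ≤ t → t ≤ T → ∀ g, 1 ≤ g → g ≤ T + 1 →
    ∀ h : 𝒳 → ℝ, Measurable h → (∃ C, ∀ x, |h x| ≤ C) →
    ∫ ω, (if G ω = g then (1 : ℝ) else 0) * h (X t ω) * (Y (T + 1) t ω - Y (T + 1) (t - 1) ω) ∂μ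
      = ∫ ω, (if G ω = g then (1 : ℝ) else 0) * h (X t ω) * δ0 t (X t ω) ∂μ

variable {Ω : Type*} [MeasurableSpace Ω] {𝒳 : Type*} [MeasurableSpace 𝒳]

/-- Observed outcome, via consistency `Y_t = Y_t(G)`. -/
noncomputable def Setup.Yobs (S : Setup Ω 𝒳) (t : ℕ) (ω : Ω) : ℝ := S.Y (S.G ω) t ω

/-- Indicator `1{G = g}`. -/
noncomputable def Setup.ind (S : Setup Ω 𝒳) (g : ℕ) (ω : Ω) : ℝ := if S.G ω = g then 1 else 0

/-- Indicator `1{G > k}` (not yet treated in period `k`). -/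
noncomputable def Setup.indGT (S : Setup Ω 𝒳) (k : ℕ) (ω : Ω) : ℝ := if k < S.G ω then 1 else 0

/-- `P(G = g)`. -/
noncomputable def Setup.Pg (S : Setup Ω 𝒳) (g : ℕ) : ℝ := ∫ ω, S.ind g ω ∂S.μ

/-- Group-period ATT `τ_{g,t} = E[1{G=g}(Y_t(g) − Y_t(∞))] / P(G=g)`. -/
noncomputable def Setup.tau (S : Setup Ω 𝒳) (g t : ℕ) : ℝ :=
  (∫ ω, S.ind g ω * (S.Y g t ω - S.Y (S.T + 1) t ω) ∂S.μ) / S.Pg g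

/-- **Theorem 1 (Identification).** Under consistency, no anticipation, and parallel
trends, for every `1 ≤ g ≤ t ≤ T` with `P(G = g) > 0`,
`τ_{g,t} = (1/P(G=g)) (E[1{G=g}(Y_t − Y_{g−1})] − Σ_{k=g}^t E[1{G=g} δ⁰_k(X_k)])`. -/
theorem identification (S : Setup Ω 𝒳) (g t : ℕ)
    (hg : 1 ≤ g) (hgt : g ≤ t) (ht : t ≤ S.T) (hP : 0 < S.Pg g) :
    S.tau g t =
      (1 / S.Pg g) *
        ((∫ ω, S.ind g ω * (S.Yobs t ω - S.Yobs (g - 1) ω) ∂S.μ)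
          - ∑ k ∈ Finset.Icc g t, ∫ ω, S.ind g ω * S.δ0 k (S.X k ω) ∂S.μ) := by
  have indMeas : Measurable (S.ind g) := by
    unfold Setup.ind
    exact Measurable.ite (S.measG (measurableSet_singleton g)) measurable_const
      measurable_const
  have indBdd : ∀ ω, ‖S.ind g ω‖ ≤ 1 := by
    intro ω; unfold Setup.ind; split <;> simp
  have hI : ∀ f : Ω → ℝ, Integrable f S.μ →
      Integrable (fun ω => S.ind g ω * f ω) S.μ := fun f hf =>
    hf.bdd_mul indMeas.aestronglyMeasurable (c := 1) (Filter.Eventually.of_forall indBdd)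
  -- pointwise consistency on {G = g}
  have hobs : ∀ s, (fun ω => S.ind g ω * S.Yobs s ω)
      = (fun ω => S.ind g ω * S.Y g s ω) := by
    intro s; funext ω
    unfold Setup.Yobs Setup.ind
    by_cases h : S.G ω = g <;> simp [h]
  -- no anticipation at period g - 1
  have hg1 : g - 1 < g := Nat.sub_lt (by omega) one_pos
  have hante : (fun ω => S.ind g ω * S.Y g (g - 1) ω)
      =ᵐ[S.μ] fun ω => S.ind g ω * S.Y (S.T + 1) (g - 1) ω :=
    (S.noAnticipation g (g - 1) hg1).mono fun ω h => by simp [h]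
  -- parallel trends with h = 1
  have hpar : ∀ k, g ≤ k → k ≤ t →
      ∫ ω, S.ind g ω * (S.Y (S.T + 1) k ω - S.Y (S.T + 1) (k - 1) ω) ∂S.μ
        = ∫ ω, S.ind g ω * S.δ0 k (S.X k ω) ∂S.μ := by
    intro k hk1 hk2
    have := S.parallel k (le_trans hg hk1) (le_trans hk2 ht) g hg (by omega)
      (fun _ => 1) measurable_const ⟨1, fun x => by norm_num⟩
    simpa [Setup.ind, mul_one] using this
  set B : ℕ → ℝ := fun k => ∫ ω, S.ind g ω * S.Y (S.T + 1) k ω ∂S.μ with hB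
  set A : ℝ := ∫ ω, S.ind g ω * S.Y g t ω ∂S.μ with hA
  -- split the difference integrals
  have hsplit : ∀ (f₁ f₂ : Ω → ℝ), Integrable f₁ S.μ → Integrable f₂ S.μ →
      ∫ ω, S.ind g ω * (f₁ ω - f₂ ω) ∂S.μ
        = (∫ ω, S.ind g ω * f₁ ω ∂S.μ) - ∫ ω, S.ind g ω * f₂ ω ∂S.μ := by
    intro f₁ f₂ h₁ h₂
    rw [← integral_sub (hI f₁ h₁) (hI f₂ h₂)]
    congr 1; funext ω; ring
  -- each summand equals B k - B (k-1)
  have hsummand : ∀ k, g ≤ k → k ≤ t →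
      ∫ ω, S.ind g ω * S.δ0 k (S.X k ω) ∂S.μ = B k - B (k - 1) := by
    intro k hk1 hk2
    rw [← hpar k hk1 hk2, hsplit _ _ (S.intY _ _) (S.intY _ _)]
  -- telescoping sum
  have htel : ∀ n, g ≤ n → n ≤ t →
      ∑ k ∈ Finset.Icc g n, ∫ ω, S.ind g ω * S.δ0 k (S.X k ω) ∂S.μ
        = B n - B (g - 1) := by
    intro n hn
    induction n, hn using Nat.le_induction with
    | base => intro hnt; rw [Finset.Icc_self, Finset.sum_singleton, hsummand g le_rfl hnt]
    | succ n hn ih =>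
      intro hnt
      rw [Finset.sum_Icc_succ_top (by omega), ih (by omega),
        hsummand (n + 1) (by omega) hnt]
      have : n + 1 - 1 = n := rfl
      rw [this]; ring
  -- observed-data integral
  have hobsint : ∫ ω, S.ind g ω * (S.Yobs t ω - S.Yobs (g - 1) ω) ∂S.μ
      = A - B (g - 1) := by
    have h1 : (fun ω => S.ind g ω * (S.Yobs t ω - S.Yobs (g - 1) ω))
        = fun ω => S.ind g ω * (S.Y g t ω - S.Y g (g - 1) ω) := by
      funext ω
      have e1 := congrFun (hobs t) ω
      have e2 := congrFun (hobs (g - 1)) ω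
      rw [mul_sub, mul_sub, e1, e2]
    rw [h1, hsplit _ _ (S.intY _ _) (S.intY _ _)]
    congr 1
    exact integral_congr_ae hante
  -- tau numerator
  have htau : S.tau g t = (A - B t) / S.Pg g := by
    unfold Setup.tau
    rw [hsplit _ _ (S.intY _ _) (S.intY _ _)]
  rw [htau, htel t hgt le_rfl, hobsint]
  field_simp
  ring

end StaggeredDiD
end

section
/- Under the staggered difference-in-differences setup, for every baseline period s and every g, t with 0 ≤ s < g ≤ t ≤ T and P(G = g) > 0, the group-period ATT equals the population regression (imputation) functional: τ_{g,t} = (1/P(G = g)) · Σ_{k=s+1}^{t} E[1{G=g} (δ_{g,k}(X_k) − δ⁰_k(X_k))]. In particular the value of this functional does not depend on the choice of s < g. -/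
open MeasureTheory Finset Filter

namespace StaggeredDiD

variable {Ω : Type*} [MeasurableSpace Ω] {𝒳 : Type*} [MeasurableSpace 𝒳]

/-- **Regression (imputation) identification.** For bounded measurable functions
`δ g k` representing the conditional mean of the observed change `ΔY_k` in group `g`,
the group-period ATT equals the population regression functional
`(1/P(G=g)) Σ_{k=s+1}^t E[1{G=g}(δ_{g,k}(X_k) − δ⁰_k(X_k))]`, for every baseline
period `s < g`; in particular the value does not depend on `s`. -/
theorem regression_identification (S : Setup Ω 𝒳)
    (δ : ℕ → ℕ → 𝒳 → ℝ)
    (measδ : ∀ g k, Measurable (δ g k))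
    (bddδ : ∀ g k, ∃ C, ∀ x, |δ g k x| ≤ C)
    (hδ : ∀ g, 1 ≤ g → g ≤ S.T + 1 → ∀ k, 1 ≤ k → k ≤ S.T →
      ∀ h : 𝒳 → ℝ, Measurable h → (∃ C, ∀ x, |h x| ≤ C) →
      ∫ ω, S.ind g ω * h (S.X k ω) * (S.Yobs k ω - S.Yobs (k - 1) ω) ∂S.μ
        = ∫ ω, S.ind g ω * h (S.X k ω) * δ g k (S.X k ω) ∂S.μ)
    (s g t : ℕ) (hs : s < g) (hg : 1 ≤ g) (hgt : g ≤ t) (ht : t ≤ S.T)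
    (hP : 0 < S.Pg g) :
    S.tau g t = (1 / S.Pg g) *
      ∑ k ∈ Finset.Icc (s + 1) t,
        ∫ ω, S.ind g ω * (δ g k (S.X k ω) - S.δ0 k (S.X k ω)) ∂S.μ := by
  classical
  haveI := S.prob
  -- measurability and boundedness of the indicator
  have measInd : Measurable (S.ind g) := by
    unfold Setup.ind
    exact Measurable.ite (S.measG (measurableSet_singleton g)) measurable_const
      measurable_const
  have bddInd : ∀ ω, ‖S.ind g ω‖ ≤ 1 := by
    intro ω; unfold Setup.ind; split <;> simp
  -- integrability of ind * f for integrable f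
  have intIndMul : ∀ {f : Ω → ℝ}, Integrable f S.μ →
      Integrable (fun ω => S.ind g ω * f ω) S.μ := by
    intro f hf
    exact hf.bdd_mul (c := 1) measInd.aestronglyMeasurable (Filter.Eventually.of_forall bddInd)
  -- integrability of bounded measurable functions
  have intBdd : ∀ {f : Ω → ℝ}, Measurable f → (∃ C, ∀ ω, |f ω| ≤ C) →
      Integrable f S.μ := by
    rintro f hf ⟨C, hC⟩
    have : Integrable (fun ω => f ω * (1 : ℝ)) S.μ :=
      (integrable_const (1 : ℝ)).bdd_mul (c := C) hf.aestronglyMeasurable (Filter.Eventually.of_forall (by simpa using hC))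
    simpa using this
  set F : ℕ → ℕ → ℝ := fun g' k => ∫ ω, S.ind g ω * S.Y g' k ω ∂S.μ with hF
  -- pointwise consistency: ind g * Yobs k = ind g * Y g k
  have consist : ∀ k ω, S.ind g ω * S.Yobs k ω = S.ind g ω * S.Y g k ω := by
    intro k ω
    unfold Setup.ind Setup.Yobs
    by_cases h : S.G ω = g
    · rw [h]
    · simp [h]
  -- key per-period identity
  have key : ∀ k ∈ Finset.Icc (s + 1) t,
      ∫ ω, S.ind g ω * (δ g k (S.X k ω) - S.δ0 k (S.X k ω)) ∂S.μ
        = (F g k - F g (k - 1)) - (F (S.T + 1) k - F (S.T + 1) (k - 1)) := by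
    intro k hk
    rw [Finset.mem_Icc] at hk
    have hk1 : 1 ≤ k := le_trans (Nat.succ_le_succ (Nat.zero_le s)) hk.1
    have hkT : k ≤ S.T := le_trans hk.2 ht
    have hone : (∃ C, ∀ x : 𝒳, |(fun _ : 𝒳 => (1:ℝ)) x| ≤ C) := ⟨1, by simp⟩
    -- observed side
    have hA := hδ g hg (le_trans hgt (Nat.le_succ_of_le ht)) k hk1 hkT
      (fun _ => (1:ℝ)) measurable_const hone
    simp only [mul_one] at hA
    -- untreated side from parallel trends
    have hB := S.parallel k hk1 hkT g hg (le_trans hgt (Nat.le_succ_of_le ht))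
      (fun _ => (1:ℝ)) measurable_const hone
    simp only [mul_one] at hB
    have hB' : ∫ ω, S.ind g ω * (S.Y (S.T + 1) k ω - S.Y (S.T + 1) (k - 1) ω) ∂S.μ
        = ∫ ω, S.ind g ω * S.δ0 k (S.X k ω) ∂S.μ := hB
    -- rewrite observed side via consistency
    have hAc : ∫ ω, S.ind g ω * (S.Yobs k ω - S.Yobs (k - 1) ω) ∂S.μ
        = ∫ ω, S.ind g ω * (S.Y g k ω - S.Y g (k - 1) ω) ∂S.μ := by
      apply integral_congr_ae
      filter_upwards with ω
      rw [mul_sub, mul_sub, consist k ω, consist (k - 1) ω]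
    -- integrability facts
    have intδ : Integrable (fun ω => S.ind g ω * δ g k (S.X k ω)) S.μ := by
      obtain ⟨C, hC⟩ := bddδ g k
      exact intIndMul (intBdd ((measδ g k).comp (S.measX k)) ⟨C, fun ω => hC _⟩)
    have intδ0 : Integrable (fun ω => S.ind g ω * S.δ0 k (S.X k ω)) S.μ := by
      obtain ⟨C, hC⟩ := S.bddδ0 k
      exact intIndMul (intBdd ((S.measδ0 k).comp (S.measX k)) ⟨C, fun ω => hC _⟩)
    have split : ∀ g' : ℕ,
        ∫ ω, S.ind g ω * (S.Y g' k ω - S.Y g' (k - 1) ω) ∂S.μ = F g' k - F g' (k - 1) := by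
      intro g'
      rw [hF]
      rw [← integral_sub (intIndMul (S.intY g' k)) (intIndMul (S.intY g' (k - 1)))]
      exact integral_congr_ae (Filter.Eventually.of_forall fun ω => mul_sub _ _ _)
    calc ∫ ω, S.ind g ω * (δ g k (S.X k ω) - S.δ0 k (S.X k ω)) ∂S.μ
        = (∫ ω, S.ind g ω * δ g k (S.X k ω) ∂S.μ)
          - ∫ ω, S.ind g ω * S.δ0 k (S.X k ω) ∂S.μ := by
          rw [← integral_sub intδ intδ0]
          exact integral_congr_ae (Filter.Eventually.of_forall fun ω => mul_sub _ _ _)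
      _ = (∫ ω, S.ind g ω * (S.Yobs k ω - S.Yobs (k - 1) ω) ∂S.μ)
          - ∫ ω, S.ind g ω * (S.Y (S.T + 1) k ω - S.Y (S.T + 1) (k - 1) ω) ∂S.μ := by
          rw [hA, hB']
      _ = (F g k - F g (k - 1)) - (F (S.T + 1) k - F (S.T + 1) (k - 1)) := by
          rw [hAc, split g, split (S.T + 1)]
  -- telescoping sum
  have telescope : ∀ g' : ℕ, ∀ u : ℕ, s ≤ u →
      ∑ k ∈ Finset.Icc (s + 1) u, (F g' k - F g' (k - 1)) = F g' u - F g' s := by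
    intro g' u hu
    induction u, hu using Nat.le_induction with
    | base => simp
    | succ n hn ih =>
        rw [Finset.sum_Icc_succ_top (Nat.succ_le_succ hn), ih]
        simp
  have hsum : ∑ k ∈ Finset.Icc (s + 1) t,
      ∫ ω, S.ind g ω * (δ g k (S.X k ω) - S.δ0 k (S.X k ω)) ∂S.μ
        = (F g t - F g s) - (F (S.T + 1) t - F (S.T + 1) s) := by
    rw [Finset.sum_congr rfl key, Finset.sum_sub_distrib,
      telescope g t (le_of_lt (lt_of_lt_of_le hs hgt)),
      telescope (S.T + 1) t (le_of_lt (lt_of_lt_of_le hs hgt))]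
  -- no anticipation at baseline s
  have hbase : F g s = F (S.T + 1) s := by
    apply integral_congr_ae
    filter_upwards [S.noAnticipation g s hs] with ω hω
    rw [hω]
  -- numerator
  have hnum : ∫ ω, S.ind g ω * (S.Y g t ω - S.Y (S.T + 1) t ω) ∂S.μ
      = F g t - F (S.T + 1) t := by
    rw [hF, ← integral_sub (intIndMul (S.intY g t)) (intIndMul (S.intY (S.T + 1) t))]
    exact integral_congr_ae (Filter.Eventually.of_forall fun ω => mul_sub _ _ _)
  rw [Setup.tau, hnum, hsum, hbase]
  field_simp
  ring

end StaggeredDiD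
end

section
/- Under the staggered difference-in-differences setup with propensity scores, for every baseline period s and every g, t with 0 ≤ s < g ≤ t ≤ T and P(G = g) > 0, the group-period ATT equals the population weighted functional that uses the never-treated group as reference: τ_{g,t} = (1/P(G = g)) · E[ 1{G=g} (Y_t − Y_s) − Σ_{k=s+1}^{t} (π_{g,k}(X_k)/π_{T+1,k}(X_k)) · 1{G=T+1} · ΔY_k ]. -/
open MeasureTheory Finset Filter

namespace StaggeredDiD

variable {Ω : Type*} [MeasurableSpace Ω] {𝒳 : Type*} [MeasurableSpace 𝒳]

/-- Staggered DiD setup with propensity scores `π g t` satisfying positivity. -/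
structure SetupPS (Ω : Type*) [MeasurableSpace Ω] (𝒳 : Type*) [MeasurableSpace 𝒳]
    extends Setup Ω 𝒳 where
  η : ℝ
  ηpos : 0 < η
  π : ℕ → ℕ → 𝒳 → ℝ
  measπ : ∀ g t, Measurable (π g t)
  πmem : ∀ g t x, π g t x ∈ Set.Icc η 1
  propensity : ∀ t, t ≤ T → ∀ g, 1 ≤ g → g ≤ T + 1 →
    ∀ h : 𝒳 → ℝ, Measurable h → (∃ C, ∀ x, |h x| ≤ C) →
    ∫ ω, (if G ω = g then (1 : ℝ) else 0) * h (X t ω) ∂μ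
      = ∫ ω, π g t (X t ω) * h (X t ω) ∂μ

-- auxiliary lemmas

lemma measInd (S : Setup Ω 𝒳) (g : ℕ) : Measurable (S.ind g) := by
  unfold Setup.ind
  exact Measurable.ite (S.measG (measurableSet_singleton g)) measurable_const measurable_const

lemma ind_abs_le (S : Setup Ω 𝒳) (g : ℕ) (ω : Ω) : ‖S.ind g ω‖ ≤ 1 := by
  unfold Setup.ind; split <;> simp

lemma tele (f : ℕ → ℝ) (s t : ℕ) (h : s ≤ t) :
    ∑ k ∈ Finset.Icc (s + 1) t, (f k - f (k - 1)) = f t - f s := by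
  induction t, h using Nat.le_induction with
  | base => simp
  | succ t ht ih =>
    rw [← Finset.insert_Icc_right_eq_Icc_add_one (by omega), Finset.sum_insert (by simp), ih]
    simp


lemma ratio_bound (S : SetupPS Ω 𝒳) (g k : ℕ) (x : 𝒳) :
    |S.π g k x / S.π (S.T + 1) k x| ≤ 1 / S.η := by
  have h1 := S.πmem g k x
  have h2 := S.πmem (S.T + 1) k x
  have hη := S.ηpos
  rw [abs_div, abs_of_nonneg (le_trans hη.le h1.1), abs_of_nonneg (le_trans hη.le h2.1)]
  exact div_le_div₀ zero_le_one h1.2 hη h2.1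

lemma key (S : SetupPS Ω 𝒳) (g k : ℕ) (hg1 : 1 ≤ g) (hgT : g ≤ S.T + 1)
    (hk1 : 1 ≤ k) (hkT : k ≤ S.T) :
    ∫ ω, S.ind g ω * (S.Y (S.T + 1) k ω - S.Y (S.T + 1) (k - 1) ω) ∂S.μ
      = ∫ ω, S.π g k (S.X k ω) / S.π (S.T + 1) k (S.X k ω) * S.ind (S.T + 1) ω
          * (S.Y (S.T + 1) k ω - S.Y (S.T + 1) (k - 1) ω) ∂S.μ := by
  have hη := S.ηpos
  have hπne : ∀ x, S.π (S.T + 1) k x ≠ 0 := fun x =>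
    ne_of_gt (lt_of_lt_of_le hη (S.πmem _ _ x).1)
  have hratio_meas : Measurable (fun x => S.π g k x / S.π (S.T + 1) k x) :=
    (S.measπ g k).div (S.measπ (S.T + 1) k)
  obtain ⟨C, hC⟩ := S.bddδ0 k
  have s1 : ∫ ω, S.ind g ω * (S.Y (S.T + 1) k ω - S.Y (S.T + 1) (k - 1) ω) ∂S.μ
      = ∫ ω, S.ind g ω * S.δ0 k (S.X k ω) ∂S.μ := by
    have := S.parallel k hk1 hkT g hg1 hgT (fun _ => 1) measurable_const ⟨1, by simp⟩
    simpa [Setup.ind] using this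
  have s2 : ∫ ω, S.ind g ω * S.δ0 k (S.X k ω) ∂S.μ
      = ∫ ω, S.π g k (S.X k ω) * S.δ0 k (S.X k ω) ∂S.μ := by
    have := S.propensity k hkT g hg1 hgT (S.δ0 k) (S.measδ0 k) ⟨C, hC⟩
    simpa [Setup.ind] using this
  have s3 : ∫ ω, S.ind (S.T + 1) ω *
        (S.π g k (S.X k ω) / S.π (S.T + 1) k (S.X k ω) * S.δ0 k (S.X k ω)) ∂S.μ
      = ∫ ω, S.π g k (S.X k ω) * S.δ0 k (S.X k ω) ∂S.μ := by
    have h := S.propensity k hkT (S.T + 1) (by omega) le_rfl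
      (fun x => S.π g k x / S.π (S.T + 1) k x * S.δ0 k x)
      (hratio_meas.mul (S.measδ0 k))
      ⟨1 / S.η * C, fun x => by
        rw [abs_mul]
        exact mul_le_mul (ratio_bound S g k x) (hC x) (abs_nonneg _) (by positivity)⟩
    simp only [Setup.ind]
    rw [h]
    exact integral_congr_ae (Eventually.of_forall fun ω => by
      field_simp [hπne (S.X k ω)])
  have s4 : ∫ ω, S.ind (S.T + 1) ω * (S.π g k (S.X k ω) / S.π (S.T + 1) k (S.X k ω))
        * (S.Y (S.T + 1) k ω - S.Y (S.T + 1) (k - 1) ω) ∂S.μ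
      = ∫ ω, S.ind (S.T + 1) ω * (S.π g k (S.X k ω) / S.π (S.T + 1) k (S.X k ω))
        * S.δ0 k (S.X k ω) ∂S.μ := by
    have := S.parallel k hk1 hkT (S.T + 1) (by omega) le_rfl
      (fun x => S.π g k x / S.π (S.T + 1) k x) hratio_meas ⟨1 / S.η, ratio_bound S g k⟩
    simpa [Setup.ind] using this
  calc ∫ ω, S.ind g ω * (S.Y (S.T + 1) k ω - S.Y (S.T + 1) (k - 1) ω) ∂S.μ
      = ∫ ω, S.π g k (S.X k ω) * S.δ0 k (S.X k ω) ∂S.μ := s1.trans s2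
    _ = ∫ ω, S.ind (S.T + 1) ω *
          (S.π g k (S.X k ω) / S.π (S.T + 1) k (S.X k ω) * S.δ0 k (S.X k ω)) ∂S.μ := s3.symm
    _ = ∫ ω, S.ind (S.T + 1) ω * (S.π g k (S.X k ω) / S.π (S.T + 1) k (S.X k ω))
          * S.δ0 k (S.X k ω) ∂S.μ :=
        integral_congr_ae (Eventually.of_forall fun ω => by ring)
    _ = ∫ ω, S.ind (S.T + 1) ω * (S.π g k (S.X k ω) / S.π (S.T + 1) k (S.X k ω))
          * (S.Y (S.T + 1) k ω - S.Y (S.T + 1) (k - 1) ω) ∂S.μ := s4.symm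
    _ = ∫ ω, S.π g k (S.X k ω) / S.π (S.T + 1) k (S.X k ω) * S.ind (S.T + 1) ω
          * (S.Y (S.T + 1) k ω - S.Y (S.T + 1) (k - 1) ω) ∂S.μ :=
        integral_congr_ae (Eventually.of_forall fun ω => by ring)


/-- **Weighted identification with the never-treated group as reference.**
For every baseline period `s < g` and `1 ≤ g ≤ t ≤ T` with `P(G=g) > 0`,
`τ_{g,t} = (1/P(G=g)) E[1{G=g}(Y_t − Y_s)`
`− Σ_{k=s+1}^t (π_{g,k}(X_k)/π_{T+1,k}(X_k)) 1{G=T+1} ΔY_k]`. -/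
theorem weighted_never_treated (S : SetupPS Ω 𝒳) (s g t : ℕ)
    (hs : s < g) (hg : 1 ≤ g) (hgt : g ≤ t) (ht : t ≤ S.T) (hP : 0 < S.Pg g) :
    S.tau g t = (1 / S.Pg g) *
      ∫ ω, S.ind g ω * (S.Yobs t ω - S.Yobs s ω)
        - ∑ k ∈ Finset.Icc (s + 1) t,
            (S.π g k (S.X k ω) / S.π (S.T + 1) k (S.X k ω)) * S.ind (S.T + 1) ω
              * (S.Yobs k ω - S.Yobs (k - 1) ω) ∂S.μ := by
  have hgT1 : g ≤ S.T + 1 := by omega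
  have hst : s ≤ t := by omega
  -- eliminate Yobs pointwise
  have hpt : ∀ ω, (S.ind g ω * (S.Yobs t ω - S.Yobs s ω)
        - ∑ k ∈ Finset.Icc (s + 1) t,
            S.π g k (S.X k ω) / S.π (S.T + 1) k (S.X k ω) * S.ind (S.T + 1) ω
              * (S.Yobs k ω - S.Yobs (k - 1) ω))
      = S.ind g ω * (S.Y g t ω - S.Y g s ω)
        - ∑ k ∈ Finset.Icc (s + 1) t,
            S.π g k (S.X k ω) / S.π (S.T + 1) k (S.X k ω) * S.ind (S.T + 1) ω
              * (S.Y (S.T + 1) k ω - S.Y (S.T + 1) (k - 1) ω) := by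
    intro ω
    congr 1
    · by_cases h : S.G ω = g <;> simp [Setup.ind, Setup.Yobs, h]
    · refine Finset.sum_congr rfl fun k _ => ?_
      by_cases h : S.G ω = S.T + 1 <;> simp [Setup.ind, Setup.Yobs, h]
  -- integrability
  have bddmul : ∀ (f : Ω → ℝ), Measurable f → (∀ ω, ‖f ω‖ ≤ 1) →
      ∀ (g₁ g₂ : Ω → ℝ), Integrable g₁ S.μ → Integrable g₂ S.μ →
      Integrable (fun ω => f ω * (g₁ ω - g₂ ω)) S.μ := fun f hf hb g₁ g₂ h1 h2 =>
    (h1.sub h2).bdd_mul hf.aestronglyMeasurable (c := 1) (Eventually.of_forall hb)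
  have I1 : Integrable (fun ω => S.ind g ω * (S.Y g t ω - S.Y g s ω)) S.μ :=
    bddmul _ (measInd S.toSetup g) (ind_abs_le S.toSetup g) _ _ (S.intY g t) (S.intY g s)
  have Ia : Integrable (fun ω => S.ind g ω * (S.Y g t ω - S.Y (S.T + 1) t ω)) S.μ :=
    bddmul _ (measInd S.toSetup g) (ind_abs_le S.toSetup g) _ _ (S.intY g t)
      (S.intY (S.T + 1) t)
  have Ib : Integrable (fun ω => S.ind g ω * (S.Y (S.T + 1) t ω - S.Y (S.T + 1) s ω)) S.μ :=
    bddmul _ (measInd S.toSetup g) (ind_abs_le S.toSetup g) _ _ (S.intY (S.T + 1) t)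
      (S.intY (S.T + 1) s)
  have I2 : ∀ k, Integrable (fun ω =>
      S.π g k (S.X k ω) / S.π (S.T + 1) k (S.X k ω) * S.ind (S.T + 1) ω
        * (S.Y (S.T + 1) k ω - S.Y (S.T + 1) (k - 1) ω)) S.μ := by
    intro k
    have hm : Measurable (fun ω =>
        S.π g k (S.X k ω) / S.π (S.T + 1) k (S.X k ω) * S.ind (S.T + 1) ω) :=
      (((S.measπ g k).div (S.measπ (S.T + 1) k)).comp (S.measX k)).mul
        (measInd S.toSetup (S.T + 1))
    refine ((S.intY (S.T + 1) k).sub (S.intY (S.T + 1) (k - 1))).bdd_mul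
      hm.aestronglyMeasurable (c := 1 / S.η) (Eventually.of_forall fun ω => ?_)
    rw [norm_mul]
    calc ‖S.π g k (S.X k ω) / S.π (S.T + 1) k (S.X k ω)‖ * ‖S.ind (S.T + 1) ω‖
        ≤ 1 / S.η * 1 :=
          mul_le_mul (ratio_bound S g k (S.X k ω)) (ind_abs_le S.toSetup _ ω)
            (norm_nonneg _) (div_nonneg zero_le_one S.ηpos.le)
      _ = 1 / S.η := mul_one _
  have Isum : Integrable (fun ω => ∑ k ∈ Finset.Icc (s + 1) t,
      S.π g k (S.X k ω) / S.π (S.T + 1) k (S.X k ω) * S.ind (S.T + 1) ω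
        * (S.Y (S.T + 1) k ω - S.Y (S.T + 1) (k - 1) ω)) S.μ :=
    integrable_finset_sum _ fun k _ => I2 k
  -- the main identity
  have main : (∫ ω, S.ind g ω * (S.Yobs t ω - S.Yobs s ω)
        - ∑ k ∈ Finset.Icc (s + 1) t,
            S.π g k (S.X k ω) / S.π (S.T + 1) k (S.X k ω) * S.ind (S.T + 1) ω
              * (S.Yobs k ω - S.Yobs (k - 1) ω) ∂S.μ)
      = ∫ ω, S.ind g ω * (S.Y g t ω - S.Y (S.T + 1) t ω) ∂S.μ := by
    rw [integral_congr_ae (Eventually.of_forall hpt), integral_sub I1 Isum,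
      integral_finset_sum _ fun k _ => I2 k]
    have e1 : ∫ ω, S.ind g ω * (S.Y g t ω - S.Y g s ω) ∂S.μ
        = ∫ ω, S.ind g ω * (S.Y g t ω - S.Y (S.T + 1) s ω) ∂S.μ := by
      refine integral_congr_ae ?_
      filter_upwards [S.noAnticipation g s hs] with ω hω
      rw [hω]
    have e2 : ∫ ω, S.ind g ω * (S.Y g t ω - S.Y (S.T + 1) s ω) ∂S.μ
        = (∫ ω, S.ind g ω * (S.Y g t ω - S.Y (S.T + 1) t ω) ∂S.μ)
          + ∫ ω, S.ind g ω * (S.Y (S.T + 1) t ω - S.Y (S.T + 1) s ω) ∂S.μ := by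
      rw [← integral_add Ia Ib]
      exact integral_congr_ae (Eventually.of_forall fun ω => by ring)
    have e3 : ∫ ω, S.ind g ω * (S.Y (S.T + 1) t ω - S.Y (S.T + 1) s ω) ∂S.μ
        = ∑ k ∈ Finset.Icc (s + 1) t,
            ∫ ω, S.ind g ω * (S.Y (S.T + 1) k ω - S.Y (S.T + 1) (k - 1) ω) ∂S.μ := by
      rw [← integral_finset_sum _ fun k _ =>
        bddmul _ (measInd S.toSetup g) (ind_abs_le S.toSetup g) _ _ (S.intY (S.T + 1) k)
          (S.intY (S.T + 1) (k - 1))]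
      refine integral_congr_ae (Eventually.of_forall fun ω => ?_)
      simp only
      rw [← Finset.mul_sum, tele (fun k => S.Y (S.T + 1) k ω) s t hst]
    have e4 : ∀ k ∈ Finset.Icc (s + 1) t,
        (∫ ω, S.ind g ω * (S.Y (S.T + 1) k ω - S.Y (S.T + 1) (k - 1) ω) ∂S.μ)
        = ∫ ω, S.π g k (S.X k ω) / S.π (S.T + 1) k (S.X k ω) * S.ind (S.T + 1) ω
            * (S.Y (S.T + 1) k ω - S.Y (S.T + 1) (k - 1) ω) ∂S.μ := by
      intro k hk
      rw [Finset.mem_Icc] at hk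
      exact key S g k hg hgT1 (by omega) (by omega)
    rw [e1, e2, e3, Finset.sum_congr rfl e4]
    ring
  rw [Setup.tau, one_div_mul_eq_div, main]


end StaggeredDiD
end

section
/- Under the staggered difference-in-differences setup with propensity scores, the augmentation term of the AIVW estimator has mean zero: for every period k ∈ {1, …, T}, every group g ∈ {1, …, T+1}, and every collection of bounded measurable weight functions w_l : 𝒳 → ℝ for l ∈ {k+1, …, T+1}, one has E[ 1{G>k} · (π_{g,k}(X_k)/π_{G,k}(X_k)) · w_G(X_k) · (ΔY_k − δ⁰_k(X_k)) ] = 0. -/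
open MeasureTheory Finset Filter

namespace StaggeredDiD

variable {Ω : Type*} [MeasurableSpace Ω] {𝒳 : Type*} [MeasurableSpace 𝒳]

/-- **Mean-zero augmentation term of the AIVW estimator.** For every period
`k ∈ {1,…,T}`, every group `g ∈ {1,…,T+1}`, and every collection of bounded
measurable weight functions `w l`,
`E[1{G>k} (π_{g,k}(X_k)/π_{G,k}(X_k)) w_G(X_k) (ΔY_k − δ⁰_k(X_k))] = 0`. -/
theorem augmentation_mean_zero (S : SetupPS Ω 𝒳) (k : ℕ) (hk1 : 1 ≤ k) (hk : k ≤ S.T)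
    (g : ℕ) (hg : 1 ≤ g) (hgT : g ≤ S.T + 1)
    (w : ℕ → 𝒳 → ℝ) (measw : ∀ l, Measurable (w l))
    (bddw : ∀ l, ∃ C, ∀ x, |w l x| ≤ C) :
    ∫ ω, S.indGT k ω * (S.π g k (S.X k ω) / S.π (S.G ω) k (S.X k ω))
        * w (S.G ω) (S.X k ω)
        * (S.Yobs k ω - S.Yobs (k - 1) ω - S.δ0 k (S.X k ω)) ∂S.μ = 0 := by
  classical
  have hprob : IsProbabilityMeasure S.μ := S.prob
  -- the weight function for a fixed group g'
  set h : ℕ → 𝒳 → ℝ := fun g' x => S.π g k x / S.π g' k x * w g' x with hh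
  have meash : ∀ g', Measurable (h g') := fun g' =>
    ((S.measπ g k).div (S.measπ g' k)).mul (measw g')
  have hbdd : ∀ g', ∃ C, ∀ x, |h g' x| ≤ C := by
    intro g'
    obtain ⟨Cw, hCw⟩ := bddw g'
    refine ⟨(1 / S.η) * Cw, fun x => ?_⟩
    have h1 := S.πmem g k x
    have h2 := S.πmem g' k x
    have hη := S.ηpos
    have hdiv : |S.π g k x / S.π g' k x| ≤ 1 / S.η := by
      rw [abs_div, abs_of_nonneg (le_trans hη.le h1.1), abs_of_nonneg (le_trans hη.le h2.1)]
      exact div_le_div₀ zero_le_one h1.2 hη h2.1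
    calc |h g' x| = |S.π g k x / S.π g' k x| * |w g' x| := abs_mul _ _
      _ ≤ (1 / S.η) * Cw := by
          apply mul_le_mul hdiv (hCw x) (abs_nonneg _)
          positivity
  -- per-group summand
  have measind : ∀ g' : ℕ, Measurable (S.ind g') := by
    intro g'
    have : MeasurableSet {ω | S.G ω = g'} := S.measG (measurableSet_singleton g')
    exact Measurable.ite this measurable_const measurable_const
  set f : ℕ → Ω → ℝ := fun g' ω =>
    S.ind g' ω * h g' (S.X k ω) * (S.Y g' k ω - S.Y g' (k - 1) ω - S.δ0 k (S.X k ω)) with hf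
  obtain ⟨Cδ, hCδ⟩ := S.bddδ0 k
  -- integrability of each summand
  have intf : ∀ g', Integrable (f g') S.μ := by
    intro g'
    obtain ⟨C, hC⟩ := hbdd g'
    have hint : Integrable (fun ω => S.Y g' k ω - S.Y g' (k - 1) ω - S.δ0 k (S.X k ω)) S.μ := by
      refine ((S.intY g' k).sub (S.intY g' (k - 1))).sub ?_
      refine Integrable.mono' (integrable_const Cδ)
        ((S.measδ0 k).comp (S.measX k)).aestronglyMeasurable ?_
      filter_upwards with ω using hCδ _
    refine hint.bdd_mul ?_ (c := max C 1) (Filter.Eventually.of_forall fun ω => ?_)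
    · exact ((measind g').mul ((meash g').comp (S.measX k))).aestronglyMeasurable
    · have : |S.ind g' ω| ≤ 1 := by
        simp only [Setup.ind]; split <;> simp
      calc ‖S.ind g' ω * h g' (S.X k ω)‖ = |S.ind g' ω| * |h g' (S.X k ω)| := abs_mul _ _
        _ ≤ 1 * max C 1 := by
            exact mul_le_mul this (le_trans (hC _) (le_max_left _ _)) (abs_nonneg _) one_pos.le
        _ = max C 1 := one_mul _
  -- pointwise decomposition
  have hdecomp : ∀ ω, S.indGT k ω * (S.π g k (S.X k ω) / S.π (S.G ω) k (S.X k ω))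
        * w (S.G ω) (S.X k ω)
        * (S.Yobs k ω - S.Yobs (k - 1) ω - S.δ0 k (S.X k ω))
      = ∑ g' ∈ Finset.Icc (k + 1) (S.T + 1), f g' ω := by
    intro ω
    by_cases hGk : k < S.G ω
    · have hmem : S.G ω ∈ Finset.Icc (k + 1) (S.T + 1) := by
        simp [Finset.mem_Icc]; exact ⟨hGk, (S.rangeG ω).2⟩
      rw [Finset.sum_eq_single_of_mem (S.G ω) hmem]
      · have hind : S.ind (S.G ω) ω = 1 := by simp [Setup.ind]
        have hGT : S.indGT k ω = 1 := by simp [Setup.indGT, hGk]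
        simp only [hf, hind, hGT, Setup.Yobs, hh, one_mul]
      · intro b _ hb
        have hne : S.G ω ≠ b := fun hc => hb hc.symm
        simp [hf, Setup.ind, hne]
    · have : S.indGT k ω = 0 := by simp [Setup.indGT, hGk]
      rw [this]
      rw [Finset.sum_eq_zero]
      · ring
      · intro b hb
        simp only [Finset.mem_Icc] at hb
        have : S.G ω ≠ b := by omega
        simp [hf, Setup.ind, this]
  -- each summand integrates to zero
  have hzero : ∀ g' ∈ Finset.Icc (k + 1) (S.T + 1), ∫ ω, f g' ω ∂S.μ = 0 := by
    intro g' hg'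
    simp only [Finset.mem_Icc] at hg'
    have hkg' : k < g' := hg'.1
    have hkg'' : k - 1 < g' := by omega
    have intA : Integrable (fun ω => S.ind g' ω * h g' (S.X k ω)
        * (S.Y g' k ω - S.Y g' (k - 1) ω)) S.μ := by
      have := (intf g').add (show Integrable (fun ω => S.ind g' ω * h g' (S.X k ω)
          * S.δ0 k (S.X k ω)) S.μ from ?_)
      · refine this.congr ?_
        filter_upwards with ω; simp only [hf, Pi.add_apply]; ring1
      · obtain ⟨C, hC⟩ := hbdd g'
        refine Integrable.mono' (integrable_const ((max C 1) * Cδ)) ?_ ?_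
        · exact (((measind g').mul ((meash g').comp (S.measX k))).mul
            ((S.measδ0 k).comp (S.measX k))).aestronglyMeasurable
        · filter_upwards with ω
          have h1 : |S.ind g' ω| ≤ 1 := by simp only [Setup.ind]; split <;> simp
          have hCδ0 : 0 ≤ Cδ := le_trans (abs_nonneg _) (hCδ (S.X k ω))
          calc ‖S.ind g' ω * h g' (S.X k ω) * S.δ0 k (S.X k ω)‖
              = |S.ind g' ω| * |h g' (S.X k ω)| * |S.δ0 k (S.X k ω)| := by
                simp only [Real.norm_eq_abs, abs_mul]
            _ ≤ 1 * max C 1 * Cδ := by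
                refine mul_le_mul (mul_le_mul h1 (le_trans (hC _) (le_max_left _ _))
                  (abs_nonneg _) one_pos.le) (hCδ _) (abs_nonneg _) ?_
                positivity
            _ = max C 1 * Cδ := by ring
    have intB : Integrable (fun ω => S.ind g' ω * h g' (S.X k ω) * S.δ0 k (S.X k ω)) S.μ := by
      have := intA.sub (intf g')
      refine this.congr ?_
      filter_upwards with ω; simp only [hf, Pi.sub_apply]; ring1
    have split : ∫ ω, f g' ω ∂S.μ
        = (∫ ω, S.ind g' ω * h g' (S.X k ω) * (S.Y g' k ω - S.Y g' (k - 1) ω) ∂S.μ)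
          - ∫ ω, S.ind g' ω * h g' (S.X k ω) * S.δ0 k (S.X k ω) ∂S.μ := by
      rw [← integral_sub intA intB]
      apply integral_congr_ae
      filter_upwards with ω; simp only [hf]; ring1
    rw [split]
    have hae1 := S.noAnticipation g' k hkg'
    have hae2 := S.noAnticipation g' (k - 1) hkg''
    have step1 : ∫ ω, S.ind g' ω * h g' (S.X k ω) * (S.Y g' k ω - S.Y g' (k - 1) ω) ∂S.μ
        = ∫ ω, S.ind g' ω * h g' (S.X k ω)
            * (S.Y (S.T + 1) k ω - S.Y (S.T + 1) (k - 1) ω) ∂S.μ := by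
      apply integral_congr_ae
      filter_upwards [hae1, hae2] with ω h1 h2
      rw [h1, h2]
    have step2 := S.parallel k hk1 hk g' (by omega) hg'.2 (h g') (meash g') (hbdd g')
    have : (fun ω => S.ind g' ω * h g' (S.X k ω)
          * (S.Y (S.T + 1) k ω - S.Y (S.T + 1) (k - 1) ω))
        = fun ω => (if S.G ω = g' then (1 : ℝ) else 0) * h g' (S.X k ω)
          * (S.Y (S.T + 1) k ω - S.Y (S.T + 1) (k - 1) ω) := rfl
    rw [step1, this, step2]
    simp [Setup.ind]
  calc ∫ ω, S.indGT k ω * (S.π g k (S.X k ω) / S.π (S.G ω) k (S.X k ω))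
        * w (S.G ω) (S.X k ω)
        * (S.Yobs k ω - S.Yobs (k - 1) ω - S.δ0 k (S.X k ω)) ∂S.μ
      = ∫ ω, ∑ g' ∈ Finset.Icc (k + 1) (S.T + 1), f g' ω ∂S.μ := by
        exact integral_congr_ae (Filter.Eventually.of_forall hdecomp)
    _ = ∑ g' ∈ Finset.Icc (k + 1) (S.T + 1), ∫ ω, f g' ω ∂S.μ :=
        integral_finset_sum _ (fun g' _ => intf g')
    _ = 0 := Finset.sum_eq_zero hzero

end StaggeredDiD
end

section
/- Double robustness with a correctly specified outcome model: under the staggered difference-in-differences setup, for any measurable working propensity functions π̃_{l,k} : 𝒳 → [η̃, 1] (η̃ > 0, l ∈ {1, …, T+1}, k ∈ {1, …, T}) and any bounded measurable working weight functions W̃_{l,k} : 𝒳 → ℝ — neither of which need be correctly specified — the population AIVW functional with the true conditional-trend functions δ⁰ recovers the group-period ATT: for every 1 ≤ g ≤ t ≤ T with P(G = g) > 0, (1/P(G = g)) · E[ 1{G=g} Σ_{k=g}^{t} (ΔY_k − δ⁰_k(X_k)) − Σ_{k=g}^{t} 1{G>k} (π̃_{g,k}(X_k)/π̃_{G,k}(X_k))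 W̃_{G,k}(X_k) (ΔY_k − δ⁰_k(X_k)) ] = τ_{g,t}. -/
open MeasureTheory Finset Filter

namespace StaggeredDiD

variable {Ω : Type*} [MeasurableSpace Ω] {𝒳 : Type*} [MeasurableSpace 𝒳]

/-! ### Auxiliary lemmas -/

private lemma aux_integrable_of_bdd (μ : Measure Ω) [IsFiniteMeasure μ]
    {φ : Ω → ℝ} (hm : AEStronglyMeasurable φ μ) {C : ℝ}
    (hb : ∀ ω, |φ ω| ≤ C) : Integrable φ μ :=
  (integrable_const C).mono' hm (Filter.Eventually.of_forall fun ω => by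
    simpa [Real.norm_eq_abs] using hb ω)

private lemma aux_telescope (f : ℕ → ℝ) (g t : ℕ) (hgt : g ≤ t) :
    ∑ k ∈ Finset.Icc g t, (f k - f (k - 1)) = f t - f (g - 1) := by
  induction t, hgt using Nat.le_induction with
  | base => simp
  | succ n hn ih =>
      rw [Finset.sum_Icc_succ_top (le_trans hn (Nat.le_succ n)), ih]
      simp only [Nat.add_sub_cancel]
      ring

private lemma aux_measInd (S : Setup Ω 𝒳) (l : ℕ) : Measurable (S.ind l) := by
  unfold Setup.ind
  exact Measurable.ite (S.measG (measurableSet_singleton l)) measurable_const measurable_const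

private lemma aux_bddInd (S : Setup Ω 𝒳) (l : ℕ) (ω : Ω) : |S.ind l ω| ≤ 1 := by
  unfold Setup.ind; split <;> norm_num

/-- Integrability of the basic building block. -/
private lemma aux_int (S : Setup Ω 𝒳) (h : 𝒳 → ℝ) (hmeas : Measurable h) (C : ℝ)
    (hC : ∀ x, |h x| ≤ C) (l j k : ℕ) :
    Integrable (fun ω => S.ind l ω * h (S.X k ω)
      * (S.Y j k ω - S.Y j (k - 1) ω - S.δ0 k (S.X k ω))) S.μ := by
  haveI := S.prob
  obtain ⟨D, hD⟩ := S.bddδ0 k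
  have measF : Measurable (fun ω => S.ind l ω * h (S.X k ω)) :=
    (aux_measInd S l).mul (hmeas.comp (S.measX k))
  have hbF : ∀ ω, ‖S.ind l ω * h (S.X k ω)‖ ≤ 1 * |C| := fun ω => by
    rw [Real.norm_eq_abs, abs_mul]
    exact mul_le_mul (aux_bddInd S l ω) ((hC _).trans (le_abs_self C)) (abs_nonneg _) zero_le_one
  have hδ : Integrable (fun ω => S.δ0 k (S.X k ω)) S.μ :=
    aux_integrable_of_bdd S.μ ((S.measδ0 k).comp (S.measX k)).aestronglyMeasurable
      (fun ω => hD _)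
  exact (((S.intY j k).sub (S.intY j (k - 1))).sub hδ).bdd_mul
    measF.aestronglyMeasurable (Filter.Eventually.of_forall hbF)

/-- The key vanishing integral for the augmentation term. -/
private lemma aux_q_zero (S : Setup Ω 𝒳) (h : 𝒳 → ℝ) (hmeas : Measurable h) (C : ℝ)
    (hC : ∀ x, |h x| ≤ C) (l k : ℕ) (hk1 : 1 ≤ k) (hkT : k ≤ S.T)
    (hl1 : 1 ≤ l) (hlT : l ≤ S.T + 1) (hkl : k < l) :
    ∫ ω, S.ind l ω * h (S.X k ω)
      * (S.Y l k ω - S.Y l (k - 1) ω - S.δ0 k (S.X k ω)) ∂S.μ = 0 := by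
  haveI := S.prob
  obtain ⟨D, hD⟩ := S.bddδ0 k
  have measF : Measurable (fun ω => S.ind l ω * h (S.X k ω)) :=
    (aux_measInd S l).mul (hmeas.comp (S.measX k))
  have hbF : ∀ ω, ‖S.ind l ω * h (S.X k ω)‖ ≤ 1 * |C| := fun ω => by
    rw [Real.norm_eq_abs, abs_mul]
    exact mul_le_mul (aux_bddInd S l ω) ((hC _).trans (le_abs_self C)) (abs_nonneg _) zero_le_one
  have i1 : Integrable (fun ω => S.ind l ω * h (S.X k ω)
      * (S.Y l k ω - S.Y l (k - 1) ω)) S.μ :=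
    ((S.intY l k).sub (S.intY l (k - 1))).bdd_mul measF.aestronglyMeasurable (Filter.Eventually.of_forall hbF)
  have i2 : Integrable (fun ω => S.ind l ω * h (S.X k ω) * S.δ0 k (S.X k ω)) S.μ := by
    refine aux_integrable_of_bdd S.μ
      (measF.mul ((S.measδ0 k).comp (S.measX k))).aestronglyMeasurable
      (C := 1 * |C| * D) fun ω => ?_
    calc |S.ind l ω * h (S.X k ω) * S.δ0 k (S.X k ω)|
        = |S.ind l ω * h (S.X k ω)| * |S.δ0 k (S.X k ω)| := abs_mul _ _
      _ ≤ 1 * |C| * D := by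
          refine mul_le_mul ?_ (hD _) (abs_nonneg _) (by positivity)
          have hb := hbF ω
          rwa [Real.norm_eq_abs] at hb
  have hsplit : (∫ ω, S.ind l ω * h (S.X k ω)
        * (S.Y l k ω - S.Y l (k - 1) ω - S.δ0 k (S.X k ω)) ∂S.μ)
      = (∫ ω, S.ind l ω * h (S.X k ω) * (S.Y l k ω - S.Y l (k - 1) ω) ∂S.μ)
        - ∫ ω, S.ind l ω * h (S.X k ω) * S.δ0 k (S.X k ω) ∂S.μ := by
    rw [← integral_sub i1 i2]
    exact integral_congr_ae (Filter.Eventually.of_forall fun ω => by ring)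
  rw [hsplit]
  have hae : (fun ω => S.ind l ω * h (S.X k ω) * (S.Y l k ω - S.Y l (k - 1) ω))
      =ᵐ[S.μ] fun ω => S.ind l ω * h (S.X k ω)
        * (S.Y (S.T + 1) k ω - S.Y (S.T + 1) (k - 1) ω) := by
    filter_upwards [S.noAnticipation l k hkl,
      S.noAnticipation l (k - 1) (lt_of_le_of_lt (Nat.sub_le k 1) hkl)] with ω h1 h2
    rw [h1, h2]
  rw [integral_congr_ae hae]
  have hpar := S.parallel k hk1 hkT l hl1 hlT h hmeas ⟨C, hC⟩
  simp only [Setup.ind]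
  rw [hpar]
  exact sub_self _

/-- **Double robustness, correctly specified outcome model.** For any measurable
working propensity functions `π̃ l k : 𝒳 → [η̃, 1]` (`η̃ > 0`) and any bounded
measurable working weight functions `W̃ l k` — neither necessarily correctly
specified — the population AIVW functional with the true conditional-trend
functions `δ⁰` recovers the group-period ATT. -/
theorem doubly_robust_outcome_correct (S : Setup Ω 𝒳)
    (πw : ℕ → ℕ → 𝒳 → ℝ) (ηw : ℝ) (hηw : 0 < ηw)
    (measπw : ∀ l k, Measurable (πw l k))
    (πwmem : ∀ l k x, πw l k x ∈ Set.Icc ηw 1)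
    (Ww : ℕ → ℕ → 𝒳 → ℝ) (measWw : ∀ l k, Measurable (Ww l k))
    (bddWw : ∀ l k, ∃ C, ∀ x, |Ww l k x| ≤ C)
    (g t : ℕ) (hg : 1 ≤ g) (hgt : g ≤ t) (ht : t ≤ S.T) (hP : 0 < S.Pg g) :
    (1 / S.Pg g) *
      ∫ ω, S.ind g ω *
            ∑ k ∈ Finset.Icc g t, (S.Yobs k ω - S.Yobs (k - 1) ω - S.δ0 k (S.X k ω))
        - ∑ k ∈ Finset.Icc g t,
            S.indGT k ω * (πw g k (S.X k ω) / πw (S.G ω) k (S.X k ω))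
              * Ww (S.G ω) k (S.X k ω)
              * (S.Yobs k ω - S.Yobs (k - 1) ω - S.δ0 k (S.X k ω)) ∂S.μ
      = S.tau g t := by
  haveI := S.prob
  -- the working ratio-times-weight functions and their bounds
  have hπbound : ∀ l k x, |πw g k x / πw l k x| ≤ 1 / ηw := by
    intro l k x
    have h1 := πwmem g k x
    have h2 := πwmem l k x
    rw [abs_of_nonneg (div_nonneg (le_trans hηw.le h1.1) (le_trans hηw.le h2.1))]
    exact div_le_div₀ zero_le_one h1.2 hηw h2.1
  -- Step 1: pointwise rewriting of the integrand
  have hpt : ∀ ω,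
      (S.ind g ω * ∑ k ∈ Finset.Icc g t, (S.Yobs k ω - S.Yobs (k - 1) ω - S.δ0 k (S.X k ω))
        - ∑ k ∈ Finset.Icc g t,
            S.indGT k ω * (πw g k (S.X k ω) / πw (S.G ω) k (S.X k ω))
              * Ww (S.G ω) k (S.X k ω)
              * (S.Yobs k ω - S.Yobs (k - 1) ω - S.δ0 k (S.X k ω)))
      = (∑ k ∈ Finset.Icc g t,
            S.ind g ω * (fun _ : 𝒳 => (1 : ℝ)) (S.X k ω)
              * (S.Y g k ω - S.Y g (k - 1) ω - S.δ0 k (S.X k ω)))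
        - ∑ k ∈ Finset.Icc g t, ∑ l ∈ Finset.Icc (k + 1) (S.T + 1),
            S.ind l ω * (fun x => πw g k x / πw l k x * Ww l k x) (S.X k ω)
              * (S.Y l k ω - S.Y l (k - 1) ω - S.δ0 k (S.X k ω)) := by
    intro ω
    congr 1
    · rw [Finset.mul_sum]
      refine Finset.sum_congr rfl fun k _ => ?_
      simp only [Setup.ind, Setup.Yobs]
      by_cases hG : S.G ω = g
      · simp [hG]
      · simp [hG]
    · refine Finset.sum_congr rfl fun k _ => ?_
      have hsum : (∑ l ∈ Finset.Icc (k + 1) (S.T + 1),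
            S.ind l ω * (fun x => πw g k x / πw l k x * Ww l k x) (S.X k ω)
              * (S.Y l k ω - S.Y l (k - 1) ω - S.δ0 k (S.X k ω)))
          = ∑ l ∈ Finset.Icc (k + 1) (S.T + 1),
              (if S.G ω = l then
                (πw g k (S.X k ω) / πw l k (S.X k ω) * Ww l k (S.X k ω))
                  * (S.Y l k ω - S.Y l (k - 1) ω - S.δ0 k (S.X k ω)) else 0) := by
        refine Finset.sum_congr rfl fun l _ => ?_
        simp only [Setup.ind]
        split <;> simp
      rw [hsum, Finset.sum_ite_eq]
      simp only [Setup.indGT, Setup.Yobs]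
      by_cases hGk : k < S.G ω
      · have hmem : S.G ω ∈ Finset.Icc (k + 1) (S.T + 1) :=
          Finset.mem_Icc.mpr ⟨hGk, (S.rangeG ω).2⟩
        rw [if_pos hmem, if_pos hGk]
        ring
      · have hmem : S.G ω ∉ Finset.Icc (k + 1) (S.T + 1) := fun hm =>
          hGk ((Finset.mem_Icc.mp hm).1)
        rw [if_neg hmem, if_neg hGk]
        ring
  -- integrabilities
  have intP : ∀ k ∈ Finset.Icc g t,
      Integrable (fun ω => S.ind g ω * (fun _ : 𝒳 => (1 : ℝ)) (S.X k ω)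
        * (S.Y g k ω - S.Y g (k - 1) ω - S.δ0 k (S.X k ω))) S.μ := fun k _ =>
    aux_int S _ measurable_const 1 (fun _ => by norm_num) g g k
  have intQ : ∀ k ∈ Finset.Icc g t, ∀ l ∈ Finset.Icc (k + 1) (S.T + 1),
      Integrable (fun ω => S.ind l ω * (fun x => πw g k x / πw l k x * Ww l k x) (S.X k ω)
        * (S.Y l k ω - S.Y l (k - 1) ω - S.δ0 k (S.X k ω))) S.μ := by
    intro k _ l _
    obtain ⟨C, hC⟩ := bddWw l k
    refine aux_int S _ (((measπw g k).div (measπw l k)).mul (measWw l k)) (1 / ηw * |C|)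
      (fun x => ?_) l l k
    show |πw g k x / πw l k x * Ww l k x| ≤ 1 / ηw * |C|
    rw [abs_mul]
    exact mul_le_mul (hπbound l k x) ((hC x).trans (le_abs_self C)) (abs_nonneg _)
      (by positivity)
  -- Step 2: compute the integral
  have key : (∫ ω,
      (S.ind g ω * ∑ k ∈ Finset.Icc g t, (S.Yobs k ω - S.Yobs (k - 1) ω - S.δ0 k (S.X k ω))
        - ∑ k ∈ Finset.Icc g t,
            S.indGT k ω * (πw g k (S.X k ω) / πw (S.G ω) k (S.X k ω))
              * Ww (S.G ω) k (S.X k ω)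
              * (S.Yobs k ω - S.Yobs (k - 1) ω - S.δ0 k (S.X k ω))) ∂S.μ)
      = ∫ ω, S.ind g ω * (S.Y g t ω - S.Y (S.T + 1) t ω) ∂S.μ := by
    rw [integral_congr_ae (Filter.Eventually.of_forall hpt)]
    rw [integral_sub (integrable_finset_sum _ intP)
      (integrable_finset_sum _ fun k hk => integrable_finset_sum _ (intQ k hk))]
    rw [integral_finset_sum _ intP,
      integral_finset_sum _ (fun k hk => integrable_finset_sum _ (intQ k hk))]
    -- the augmentation double sum vanishes
    have hQ0 : (∑ k ∈ Finset.Icc g t, ∫ ω, ∑ l ∈ Finset.Icc (k + 1) (S.T + 1),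
        S.ind l ω * (fun x => πw g k x / πw l k x * Ww l k x) (S.X k ω)
          * (S.Y l k ω - S.Y l (k - 1) ω - S.δ0 k (S.X k ω)) ∂S.μ) = 0 := by
      refine Finset.sum_eq_zero fun k hk => ?_
      obtain ⟨hk1, hk2⟩ := Finset.mem_Icc.mp hk
      rw [integral_finset_sum _ (intQ k hk)]
      refine Finset.sum_eq_zero fun l hl => ?_
      obtain ⟨hl1, hl2⟩ := Finset.mem_Icc.mp hl
      obtain ⟨C, hC⟩ := bddWw l k
      refine aux_q_zero S _ (((measπw g k).div (measπw l k)).mul (measWw l k))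
        (1 / ηw * |C|) (fun x => ?_) l k (le_trans hg hk1) (le_trans hk2 ht)
        (by omega) hl2 (by omega)
      show |πw g k x / πw l k x * Ww l k x| ≤ 1 / ηw * |C|
      rw [abs_mul]
      exact mul_le_mul (hπbound l k x) ((hC x).trans (le_abs_self C)) (abs_nonneg _)
        (by positivity)
    rw [hQ0, sub_zero]
    -- the outcome sum telescopes
    have hP1 : ∀ k ∈ Finset.Icc g t,
        (∫ ω, S.ind g ω * (fun _ : 𝒳 => (1 : ℝ)) (S.X k ω)
          * (S.Y g k ω - S.Y g (k - 1) ω - S.δ0 k (S.X k ω)) ∂S.μ)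
        = ∫ ω, S.ind g ω * ((S.Y g k ω - S.Y (S.T + 1) k ω)
            - (S.Y g (k - 1) ω - S.Y (S.T + 1) (k - 1) ω)) ∂S.μ := by
      intro k hk
      obtain ⟨hk1, hk2⟩ := Finset.mem_Icc.mp hk
      obtain ⟨D, hD⟩ := S.bddδ0 k
      have i1 : Integrable (fun ω => S.ind g ω * (S.Y g k ω - S.Y g (k - 1) ω)) S.μ :=
        ((S.intY g k).sub (S.intY g (k - 1))).bdd_mul (aux_measInd S g).aestronglyMeasurable
          (c := 1) (Filter.Eventually.of_forall fun ω => by simpa [Real.norm_eq_abs] using aux_bddInd S g ω)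
      have i2 : Integrable (fun ω => S.ind g ω * S.δ0 k (S.X k ω)) S.μ := by
        refine aux_integrable_of_bdd S.μ
          ((aux_measInd S g).mul ((S.measδ0 k).comp (S.measX k))).aestronglyMeasurable
          (C := 1 * D) fun ω => ?_
        rw [abs_mul]
        exact mul_le_mul (aux_bddInd S g ω) (hD _) (abs_nonneg _) zero_le_one
      have i3 : Integrable (fun ω => S.ind g ω
          * (S.Y (S.T + 1) k ω - S.Y (S.T + 1) (k - 1) ω)) S.μ :=
        ((S.intY (S.T + 1) k).sub (S.intY (S.T + 1) (k - 1))).bdd_mul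
          (aux_measInd S g).aestronglyMeasurable
          (c := 1) (Filter.Eventually.of_forall fun ω => by simpa [Real.norm_eq_abs] using aux_bddInd S g ω)
      have hswap : (∫ ω, S.ind g ω * S.δ0 k (S.X k ω) ∂S.μ)
          = ∫ ω, S.ind g ω * (S.Y (S.T + 1) k ω - S.Y (S.T + 1) (k - 1) ω) ∂S.μ := by
        have hpar := S.parallel k (le_trans hg hk1) (le_trans hk2 ht) g hg (by omega)
          (fun _ => (1 : ℝ)) measurable_const ⟨1, fun x => by norm_num⟩
        simp only [mul_one] at hpar
        simp only [Setup.ind]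
        exact hpar.symm
      calc (∫ ω, S.ind g ω * (fun _ : 𝒳 => (1 : ℝ)) (S.X k ω)
            * (S.Y g k ω - S.Y g (k - 1) ω - S.δ0 k (S.X k ω)) ∂S.μ)
          = (∫ ω, S.ind g ω * (S.Y g k ω - S.Y g (k - 1) ω) ∂S.μ)
            - ∫ ω, S.ind g ω * S.δ0 k (S.X k ω) ∂S.μ := by
            rw [← integral_sub i1 i2]
            exact integral_congr_ae (Filter.Eventually.of_forall fun ω => by simp; ring)
        _ = (∫ ω, S.ind g ω * (S.Y g k ω - S.Y g (k - 1) ω) ∂S.μ)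
            - ∫ ω, S.ind g ω * (S.Y (S.T + 1) k ω - S.Y (S.T + 1) (k - 1) ω) ∂S.μ := by
            rw [hswap]
        _ = ∫ ω, S.ind g ω * ((S.Y g k ω - S.Y (S.T + 1) k ω)
              - (S.Y g (k - 1) ω - S.Y (S.T + 1) (k - 1) ω)) ∂S.μ := by
            rw [← integral_sub i1 i3]
            exact integral_congr_ae (Filter.Eventually.of_forall fun ω => by ring)
    rw [Finset.sum_congr rfl hP1]
    have intR : ∀ k ∈ Finset.Icc g t,
        Integrable (fun ω => S.ind g ω * ((S.Y g k ω - S.Y (S.T + 1) k ω)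
          - (S.Y g (k - 1) ω - S.Y (S.T + 1) (k - 1) ω))) S.μ := fun k _ =>
      (((S.intY g k).sub (S.intY (S.T + 1) k)).sub
          ((S.intY g (k - 1)).sub (S.intY (S.T + 1) (k - 1)))).bdd_mul
        (aux_measInd S g).aestronglyMeasurable
        (c := 1) (Filter.Eventually.of_forall fun ω => by simpa [Real.norm_eq_abs] using aux_bddInd S g ω)
    rw [← integral_finset_sum _ intR]
    refine integral_congr_ae ?_
    filter_upwards [S.noAnticipation g (g - 1) (Nat.sub_lt hg one_pos)] with ω hna
    rw [← Finset.mul_sum]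
    have htel := aux_telescope (fun k => S.Y g k ω - S.Y (S.T + 1) k ω) g t hgt
    rw [htel, hna]
    ring
  rw [key]
  simp only [Setup.tau]
  field_simp


end StaggeredDiD
end

section
/- Strong consistency of the AIVW group-period estimator with fixed doubly robust working models (fixed-model version of Theorem 2): let (G_i, (X_{t,i})_t, (Y_{t,i})_t), i = 1, 2, …, be i.i.d. copies of (G, (X_t)_t, (Y_t)_t) from the staggered DiD setup. Let δ̂_k : 𝒳 → ℝ be bounded measurable, π̂_{l,k} : 𝒳 → [η̂, 1] measurable with η̂ > 0, and Ŵ_{l,k} : 𝒳 → ℝ bounded measurable with Σ_{l=k+1}^{T+1} Ŵ_{l,k}(x) = 1 for all x. Assume at least one of: (a) δ̂_k = δ⁰_k for all k (outcome model correct), or (b) π̂_{l,k} = π_{l,k} for all l, k (propensity model correct). Fix 1 ≤ g ≤ t ≤ T with P(G = g) > 0 and define τ̂_{g,t}^{(n)} = A_n / B_n, where B_n = (1/n) Σ_{i=1}^{n} 1{G_i = g} and A_n = (1/n) Σ_{i=1}^{n} [ 1{G_i=g} Σ_{k=g}^{t} (ΔY_{k,i} − δ̂_k(X_{k,i})) −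 Σ_{k=g}^{t} 1{G_i>k} (π̂_{g,k}(X_{k,i})/π̂_{G_i,k}(X_{k,i})) Ŵ_{G_i,k}(X_{k,i}) (ΔY_{k,i} − δ̂_k(X_{k,i})) ]. Then τ̂_{g,t}^{(n)} → τ_{g,t} almost surely as n → ∞. -/
open MeasureTheory Finset Filter

namespace StaggeredDiD

variable {Ω : Type*} [MeasurableSpace Ω] {𝒳 : Type*} [MeasurableSpace 𝒳]

/-! ### Auxiliary lemmas -/

lemma telescope_sum (f : ℕ → ℝ) {g : ℕ} (hg : 1 ≤ g) :
    ∀ t, g ≤ t → ∑ k ∈ Finset.Icc g t, (f k - f (k - 1)) = f t - f (g - 1) := by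
  intro t
  induction t with
  | zero => intro h; omega
  | succ n ih =>
    intro h
    rcases Nat.lt_or_ge n g with h1 | h1
    · have hgn : g = n + 1 := by omega
      subst hgn
      simp
    · rw [Finset.sum_Icc_succ_top (by omega : g ≤ n + 1), ih h1]
      simp only [Nat.add_sub_cancel]
      ring

lemma integrable_of_bdd' {Ω : Type*} [MeasurableSpace Ω] {μ : Measure Ω} [IsFiniteMeasure μ]
    {f : Ω → ℝ} (hm : Measurable f) (C : ℝ) (hb : ∀ ω, |f ω| ≤ C) : Integrable f μ :=
  Integrable.mono' (integrable_const C) hm.aestronglyMeasurable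
    (Filter.Eventually.of_forall fun ω => by simpa [Real.norm_eq_abs] using hb ω)

lemma Setup.measurable_Yobs {Ω : Type*} [MeasurableSpace Ω] {𝒳 : Type*} [MeasurableSpace 𝒳]
    (S : Setup Ω 𝒳) (t : ℕ) : Measurable (S.Yobs t) := by
  have h : Measurable (fun p : Ω × ℕ => S.Y p.2 t p.1) :=
    measurable_from_prod_countable_left fun l => S.measY l t
  exact h.comp (measurable_id.prodMk S.measG)

lemma Setup.integrable_Yobs {Ω : Type*} [MeasurableSpace Ω] {𝒳 : Type*} [MeasurableSpace 𝒳]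
    (S : Setup Ω 𝒳) (t : ℕ) : Integrable (S.Yobs t) S.μ := by
  haveI := S.prob
  have h : S.Yobs t = fun ω => ∑ l ∈ Finset.Icc 1 (S.T + 1),
      (if S.G ω = l then (1 : ℝ) else 0) * S.Y l t ω := by
    funext ω
    have h1 : ∀ l ∈ Finset.Icc 1 (S.T + 1), (if S.G ω = l then (1:ℝ) else 0) * S.Y l t ω
        = if S.G ω = l then S.Y l t ω else 0 := by intro l _; split <;> simp
    rw [Finset.sum_congr rfl h1, Finset.sum_ite_eq]
    simp [Setup.Yobs, Finset.mem_Icc, (S.rangeG ω).1, (S.rangeG ω).2]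
  rw [h]
  exact integrable_finset_sum _ fun l _ =>
    (S.intY l t).bdd_mul (Measurable.ite (S.measG (measurableSet_singleton l))
      measurable_const measurable_const).aestronglyMeasurable
      (c := 1) (Filter.Eventually.of_forall fun ω => by split <;> simp)


/-- Identification: the population mean of the AIVW score equals
`E[1{G=g}(Y_t(g) - Y_t(∞))]`, together with integrability of the score. -/
lemma identification_s9 {Ω : Type*} [MeasurableSpace Ω] {𝒳 : Type*} [MeasurableSpace 𝒳]
    (S : SetupPS Ω 𝒳)
    (δhat : ℕ → 𝒳 → ℝ) (measδhat : ∀ k, Measurable (δhat k))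
    (bddδhat : ∀ k, ∃ C, ∀ x, |δhat k x| ≤ C)
    (ηhat : ℝ) (hηhat : 0 < ηhat)
    (πhat : ℕ → ℕ → 𝒳 → ℝ) (measπhat : ∀ l k, Measurable (πhat l k))
    (πhatmem : ∀ l k x, πhat l k x ∈ Set.Icc ηhat 1)
    (What : ℕ → ℕ → 𝒳 → ℝ) (measWhat : ∀ l k, Measurable (What l k))
    (bddWhat : ∀ l k, ∃ C, ∀ x, |What l k x| ≤ C)
    (Whatsum : ∀ k x, ∑ l ∈ Finset.Icc (k + 1) (S.T + 1), What l k x = 1)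
    (hDR : (∀ k, δhat k = S.δ0 k) ∨ (∀ l k, πhat l k = S.π l k))
    (g t : ℕ) (hg : 1 ≤ g) (hgt : g ≤ t) (ht : t ≤ S.T) :
    Integrable (fun ω =>
      (if S.G ω = g then (1:ℝ) else 0) *
          ∑ k ∈ Finset.Icc g t, (S.Yobs k ω - S.Yobs (k-1) ω - δhat k (S.X k ω))
        - ∑ k ∈ Finset.Icc g t, (if k < S.G ω then (1:ℝ) else 0) *
            (πhat g k (S.X k ω) / πhat (S.G ω) k (S.X k ω)) *
            What (S.G ω) k (S.X k ω) *
            (S.Yobs k ω - S.Yobs (k-1) ω - δhat k (S.X k ω))) S.μ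
    ∧ (∫ ω, ((if S.G ω = g then (1:ℝ) else 0) *
          ∑ k ∈ Finset.Icc g t, (S.Yobs k ω - S.Yobs (k-1) ω - δhat k (S.X k ω))
        - ∑ k ∈ Finset.Icc g t, (if k < S.G ω then (1:ℝ) else 0) *
            (πhat g k (S.X k ω) / πhat (S.G ω) k (S.X k ω)) *
            What (S.G ω) k (S.X k ω) *
            (S.Yobs k ω - S.Yobs (k-1) ω - δhat k (S.X k ω))) ∂S.μ
      = ∫ ω, (if S.G ω = g then (1:ℝ) else 0) * (S.Y g t ω - S.Y (S.T+1) t ω) ∂S.μ) := by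
  haveI := S.prob
  -- basic measurability and boundedness facts
  have measD : ∀ k, Measurable (fun ω => S.Yobs k ω - S.Yobs (k-1) ω - δhat k (S.X k ω)) :=
    fun k => ((S.measurable_Yobs k).sub (S.measurable_Yobs (k-1))).sub
      ((measδhat k).comp (S.measX k))
  have intδX : ∀ k, Integrable (fun ω => δhat k (S.X k ω)) S.μ := by
    intro k
    obtain ⟨C, hC⟩ := bddδhat k
    exact integrable_of_bdd' ((measδhat k).comp (S.measX k)) C (fun ω => hC _)
  have intD : ∀ k, Integrable (fun ω => S.Yobs k ω - S.Yobs (k-1) ω - δhat k (S.X k ω)) S.μ :=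
    fun k => ((S.integrable_Yobs k).sub (S.integrable_Yobs (k-1))).sub (intδX k)
  have measind : ∀ l, Measurable (fun ω => if S.G ω = l then (1:ℝ) else 0) :=
    fun l => Measurable.ite (S.measG (measurableSet_singleton l)) measurable_const
      measurable_const
  have bddind : ∀ l, ∃ C, ∀ ω, |(if S.G ω = l then (1:ℝ) else 0)| ≤ C :=
    fun l => ⟨1, fun ω => by split <;> simp⟩
  have ibm : ∀ (b f : Ω → ℝ), Measurable b → (∃ C, ∀ ω, |b ω| ≤ C) → Integrable f S.μ →
      Integrable (fun ω => b ω * f ω) S.μ := by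
    rintro b f hb ⟨C, hC⟩ hf
    exact hf.bdd_mul hb.aestronglyMeasurable (c := C) (Filter.Eventually.of_forall fun ω => by
      simpa [Real.norm_eq_abs] using hC ω)
  have measFx : ∀ l k, Measurable (fun x => πhat g k x / πhat l k x * What l k x) :=
    fun l k => ((measπhat g k).div (measπhat l k)).mul (measWhat l k)
  have bddFx : ∀ l k, ∃ C, ∀ x, |πhat g k x / πhat l k x * What l k x| ≤ C := by
    intro l k
    obtain ⟨C, hC⟩ := bddWhat l k
    refine ⟨(1/ηhat) * C, fun x => ?_⟩
    rw [abs_mul]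
    have h1 : |πhat g k x / πhat l k x| ≤ 1/ηhat := by
      rw [abs_div]
      have ha : |πhat g k x| ≤ 1 := abs_le.mpr
        ⟨by linarith [(πhatmem g k x).1], (πhatmem g k x).2⟩
      have hb : ηhat ≤ |πhat l k x| := by
        rw [abs_of_pos (lt_of_lt_of_le hηhat (πhatmem l k x).1)]
        exact (πhatmem l k x).1
      exact div_le_div₀ zero_le_one ha hηhat hb
    exact mul_le_mul h1 (hC x) (abs_nonneg _) (by positivity)
  -- split the inverse-weighting term over treatment groups
  have hsplit : ∀ k, ∀ ω : Ω,
      (if k < S.G ω then (1:ℝ) else 0) *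
        (πhat g k (S.X k ω) / πhat (S.G ω) k (S.X k ω)) *
        What (S.G ω) k (S.X k ω) *
        (S.Yobs k ω - S.Yobs (k-1) ω - δhat k (S.X k ω))
      = ∑ l ∈ Finset.Icc (k+1) (S.T+1), (if S.G ω = l then (1:ℝ) else 0) *
          ((πhat g k (S.X k ω) / πhat l k (S.X k ω) * What l k (S.X k ω)) *
            (S.Yobs k ω - S.Yobs (k-1) ω - δhat k (S.X k ω))) := by
    intro k ω
    have h1 : ∀ l ∈ Finset.Icc (k+1) (S.T+1), (if S.G ω = l then (1:ℝ) else 0) *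
          ((πhat g k (S.X k ω) / πhat l k (S.X k ω) * What l k (S.X k ω)) *
            (S.Yobs k ω - S.Yobs (k-1) ω - δhat k (S.X k ω)))
        = if S.G ω = l then (πhat g k (S.X k ω) / πhat l k (S.X k ω) * What l k (S.X k ω)) *
            (S.Yobs k ω - S.Yobs (k-1) ω - δhat k (S.X k ω)) else 0 := by
      intro l _; split <;> simp
    rw [Finset.sum_congr rfl h1, Finset.sum_ite_eq]
    by_cases hk : k < S.G ω
    · have hmem : S.G ω ∈ Finset.Icc (k+1) (S.T+1) :=
        Finset.mem_Icc.mpr ⟨hk, (S.rangeG ω).2⟩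
      rw [if_pos hmem, if_pos hk]
      ring
    · have hmem : S.G ω ∉ Finset.Icc (k+1) (S.T+1) := by
        rw [Finset.mem_Icc]; omega
      rw [if_neg hmem, if_neg hk]
      ring
  have hfeq : (fun ω =>
      (if S.G ω = g then (1:ℝ) else 0) *
          ∑ k ∈ Finset.Icc g t, (S.Yobs k ω - S.Yobs (k-1) ω - δhat k (S.X k ω))
        - ∑ k ∈ Finset.Icc g t, (if k < S.G ω then (1:ℝ) else 0) *
            (πhat g k (S.X k ω) / πhat (S.G ω) k (S.X k ω)) *
            What (S.G ω) k (S.X k ω) *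
            (S.Yobs k ω - S.Yobs (k-1) ω - δhat k (S.X k ω)))
      = (fun ω =>
        (∑ k ∈ Finset.Icc g t, (if S.G ω = g then (1:ℝ) else 0) *
          (S.Yobs k ω - S.Yobs (k-1) ω - δhat k (S.X k ω)))
        - ∑ k ∈ Finset.Icc g t, ∑ l ∈ Finset.Icc (k+1) (S.T+1),
            (if S.G ω = l then (1:ℝ) else 0) *
              ((πhat g k (S.X k ω) / πhat l k (S.X k ω) * What l k (S.X k ω)) *
                (S.Yobs k ω - S.Yobs (k-1) ω - δhat k (S.X k ω)))) := by
    funext ω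
    rw [Finset.mul_sum]
    congr 1
    exact Finset.sum_congr rfl fun k _ => hsplit k ω
  have intT1 : ∀ k, Integrable (fun ω => (if S.G ω = g then (1:ℝ) else 0) *
      (S.Yobs k ω - S.Yobs (k-1) ω - δhat k (S.X k ω))) S.μ :=
    fun k => ibm _ _ (measind g) (bddind g) (intD k)
  have intS : ∀ k l, Integrable (fun ω => (if S.G ω = l then (1:ℝ) else 0) *
      ((πhat g k (S.X k ω) / πhat l k (S.X k ω) * What l k (S.X k ω)) *
        (S.Yobs k ω - S.Yobs (k-1) ω - δhat k (S.X k ω)))) S.μ := by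
    intro k l
    refine ibm _ _ (measind l) (bddind l) (ibm _ _ ((measFx l k).comp (S.measX k)) ?_ (intD k))
    obtain ⟨C, hC⟩ := bddFx l k
    exact ⟨C, fun ω => hC _⟩
  have intLHS : Integrable (fun ω =>
      (if S.G ω = g then (1:ℝ) else 0) *
          ∑ k ∈ Finset.Icc g t, (S.Yobs k ω - S.Yobs (k-1) ω - δhat k (S.X k ω))
        - ∑ k ∈ Finset.Icc g t, (if k < S.G ω then (1:ℝ) else 0) *
            (πhat g k (S.X k ω) / πhat (S.G ω) k (S.X k ω)) *
            What (S.G ω) k (S.X k ω) *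
            (S.Yobs k ω - S.Yobs (k-1) ω - δhat k (S.X k ω))) S.μ := by
    rw [hfeq]
    exact (integrable_finset_sum _ fun k _ => intT1 k).sub
      (integrable_finset_sum _ fun k _ => integrable_finset_sum _ fun l _ => intS k l)
  refine ⟨intLHS, ?_⟩
  -- integrability of auxiliary pieces
  have intδ0X : ∀ k, Integrable (fun ω => S.δ0 k (S.X k ω)) S.μ := by
    intro k
    obtain ⟨C, hC⟩ := S.bddδ0 k
    exact integrable_of_bdd' ((S.measδ0 k).comp (S.measX k)) C (fun ω => hC _)
  -- the key per-period, per-group computation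
  have key : ∀ k ∈ Finset.Icc g t,
      (∑ l ∈ Finset.Icc (k+1) (S.T+1), ∫ ω, (if S.G ω = l then (1:ℝ) else 0) *
          ((πhat g k (S.X k ω) / πhat l k (S.X k ω) * What l k (S.X k ω)) *
            (S.Yobs k ω - S.Yobs (k-1) ω - δhat k (S.X k ω))) ∂S.μ)
      = ∫ ω, (if S.G ω = g then (1:ℝ) else 0) *
          (S.δ0 k (S.X k ω) - δhat k (S.X k ω)) ∂S.μ := by
    intro k hk
    rw [Finset.mem_Icc] at hk
    have hk1 : 1 ≤ k := le_trans hg hk.1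
    have hkT : k ≤ S.T := le_trans hk.2 ht
    have perl : ∀ l ∈ Finset.Icc (k+1) (S.T+1),
        (∫ ω, (if S.G ω = l then (1:ℝ) else 0) *
          ((πhat g k (S.X k ω) / πhat l k (S.X k ω) * What l k (S.X k ω)) *
            (S.Yobs k ω - S.Yobs (k-1) ω - δhat k (S.X k ω))) ∂S.μ)
        = ∫ ω, (if S.G ω = l then (1:ℝ) else 0) *
          ((πhat g k (S.X k ω) / πhat l k (S.X k ω) * What l k (S.X k ω)) *
            (S.δ0 k (S.X k ω) - δhat k (S.X k ω))) ∂S.μ := by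
      intro l hl
      rw [Finset.mem_Icc] at hl
      have e1 : (fun ω => (if S.G ω = l then (1:ℝ) else 0) *
          ((πhat g k (S.X k ω) / πhat l k (S.X k ω) * What l k (S.X k ω)) *
            (S.Yobs k ω - S.Yobs (k-1) ω - δhat k (S.X k ω))))
          =ᵐ[S.μ] (fun ω => (if S.G ω = l then (1:ℝ) else 0) *
          ((πhat g k (S.X k ω) / πhat l k (S.X k ω) * What l k (S.X k ω)) *
            (S.Y (S.T+1) k ω - S.Y (S.T+1) (k-1) ω - δhat k (S.X k ω)))) := by
        filter_upwards [S.noAnticipation l k (by omega), S.noAnticipation l (k-1) (by omega)]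
          with ω h1 h2
        by_cases hG : S.G ω = l
        · simp only [Setup.Yobs, hG, h1, h2]
        · simp [hG]
      rw [integral_congr_ae e1]
      have measITEF : Measurable (fun ω => (if S.G ω = l then (1:ℝ) else 0) *
          (πhat g k (S.X k ω) / πhat l k (S.X k ω) * What l k (S.X k ω))) :=
        (measind l).mul ((measFx l k).comp (S.measX k))
      have bddITEF : ∃ C, ∀ ω : Ω, |(if S.G ω = l then (1:ℝ) else 0) *
          (πhat g k (S.X k ω) / πhat l k (S.X k ω) * What l k (S.X k ω))| ≤ C := by
        obtain ⟨C, hC⟩ := bddFx l k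
        refine ⟨C, fun ω => ?_⟩
        rw [abs_mul]
        calc |(if S.G ω = l then (1:ℝ) else 0)| * |πhat g k (S.X k ω) / πhat l k (S.X k ω) *
              What l k (S.X k ω)|
            ≤ 1 * |πhat g k (S.X k ω) / πhat l k (S.X k ω) * What l k (S.X k ω)| := by
              apply mul_le_mul_of_nonneg_right _ (abs_nonneg _)
              split <;> simp
          _ = |πhat g k (S.X k ω) / πhat l k (S.X k ω) * What l k (S.X k ω)| := one_mul _
          _ ≤ C := hC _
      have i1 : Integrable (fun ω => (if S.G ω = l then (1:ℝ) else 0) *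
          (πhat g k (S.X k ω) / πhat l k (S.X k ω) * What l k (S.X k ω)) *
          (S.Y (S.T+1) k ω - S.Y (S.T+1) (k-1) ω)) S.μ :=
        ibm _ _ measITEF bddITEF ((S.intY (S.T+1) k).sub (S.intY (S.T+1) (k-1)))
      have i2 : Integrable (fun ω => (if S.G ω = l then (1:ℝ) else 0) *
          (πhat g k (S.X k ω) / πhat l k (S.X k ω) * What l k (S.X k ω)) *
          δhat k (S.X k ω)) S.μ := ibm _ _ measITEF bddITEF (intδX k)
      have i3 : Integrable (fun ω => (if S.G ω = l then (1:ℝ) else 0) *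
          (πhat g k (S.X k ω) / πhat l k (S.X k ω) * What l k (S.X k ω)) *
          S.δ0 k (S.X k ω)) S.μ := ibm _ _ measITEF bddITEF (intδ0X k)
      have s1 : (fun ω => (if S.G ω = l then (1:ℝ) else 0) *
          ((πhat g k (S.X k ω) / πhat l k (S.X k ω) * What l k (S.X k ω)) *
            (S.Y (S.T+1) k ω - S.Y (S.T+1) (k-1) ω - δhat k (S.X k ω))))
          = (fun ω => (if S.G ω = l then (1:ℝ) else 0) *
          (πhat g k (S.X k ω) / πhat l k (S.X k ω) * What l k (S.X k ω)) *
          (S.Y (S.T+1) k ω - S.Y (S.T+1) (k-1) ω)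
          - (if S.G ω = l then (1:ℝ) else 0) *
          (πhat g k (S.X k ω) / πhat l k (S.X k ω) * What l k (S.X k ω)) *
          δhat k (S.X k ω)) := funext fun ω => by ring
      have s2 : (fun ω => (if S.G ω = l then (1:ℝ) else 0) *
          ((πhat g k (S.X k ω) / πhat l k (S.X k ω) * What l k (S.X k ω)) *
            (S.δ0 k (S.X k ω) - δhat k (S.X k ω))))
          = (fun ω => (if S.G ω = l then (1:ℝ) else 0) *
          (πhat g k (S.X k ω) / πhat l k (S.X k ω) * What l k (S.X k ω)) *
          S.δ0 k (S.X k ω)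
          - (if S.G ω = l then (1:ℝ) else 0) *
          (πhat g k (S.X k ω) / πhat l k (S.X k ω) * What l k (S.X k ω)) *
          δhat k (S.X k ω)) := funext fun ω => by ring
      rw [s1, s2, integral_sub i1 i2, integral_sub i3 i2]
      congr 1
      exact S.parallel k hk1 hkT l (by omega) hl.2
        (fun x => πhat g k x / πhat l k x * What l k x) (measFx l k) (bddFx l k)
    rw [Finset.sum_congr rfl perl]
    rcases hDR with ha | hb
    · -- outcome model correct: both sides vanish
      have z : ∀ l ∈ Finset.Icc (k+1) (S.T+1),
          (∫ ω, (if S.G ω = l then (1:ℝ) else 0) *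
            ((πhat g k (S.X k ω) / πhat l k (S.X k ω) * What l k (S.X k ω)) *
              (S.δ0 k (S.X k ω) - δhat k (S.X k ω))) ∂S.μ) = 0 := by
        intro l _
        have hz : (fun ω => (if S.G ω = l then (1:ℝ) else 0) *
            ((πhat g k (S.X k ω) / πhat l k (S.X k ω) * What l k (S.X k ω)) *
              (S.δ0 k (S.X k ω) - δhat k (S.X k ω)))) = fun _ => (0:ℝ) :=
          funext fun ω => by rw [ha k]; ring
        rw [hz, integral_zero]
      rw [Finset.sum_eq_zero z]
      have hz2 : (fun ω => (if S.G ω = g then (1:ℝ) else 0) *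
          (S.δ0 k (S.X k ω) - δhat k (S.X k ω))) = fun _ => (0:ℝ) :=
        funext fun ω => by rw [ha k]; ring
      rw [hz2, integral_zero]
    · -- propensity model correct
      have perl2 : ∀ l ∈ Finset.Icc (k+1) (S.T+1),
          (∫ ω, (if S.G ω = l then (1:ℝ) else 0) *
            ((πhat g k (S.X k ω) / πhat l k (S.X k ω) * What l k (S.X k ω)) *
              (S.δ0 k (S.X k ω) - δhat k (S.X k ω))) ∂S.μ)
          = ∫ ω, S.π g k (S.X k ω) *
              (What l k (S.X k ω) * (S.δ0 k (S.X k ω) - δhat k (S.X k ω))) ∂S.μ := by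
        intro l hl
        rw [Finset.mem_Icc] at hl
        have measH : Measurable (fun x => πhat g k x / πhat l k x * What l k x *
            (S.δ0 k x - δhat k x)) := (measFx l k).mul ((S.measδ0 k).sub (measδhat k))
        have bddH : ∃ C, ∀ x, |πhat g k x / πhat l k x * What l k x *
            (S.δ0 k x - δhat k x)| ≤ C := by
          obtain ⟨C, hC⟩ := bddFx l k
          obtain ⟨C0, hC0⟩ := S.bddδ0 k
          obtain ⟨C1, hC1⟩ := bddδhat k
          refine ⟨C * (C0 + C1), fun x => ?_⟩
          rw [abs_mul]
          have hd : |S.δ0 k x - δhat k x| ≤ C0 + C1 := by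
            have := abs_add_le (S.δ0 k x) (-(δhat k x))
            simp only [← sub_eq_add_neg, abs_neg] at this
            exact this.trans (add_le_add (hC0 x) (hC1 x))
          exact mul_le_mul (hC x) hd (abs_nonneg _) (le_trans (abs_nonneg _) (hC x))
        have prop := S.propensity k hkT l (by omega) hl.2
          (fun x => πhat g k x / πhat l k x * What l k x * (S.δ0 k x - δhat k x)) measH bddH
        have assoc1 : (fun ω => (if S.G ω = l then (1:ℝ) else 0) *
            ((πhat g k (S.X k ω) / πhat l k (S.X k ω) * What l k (S.X k ω)) *
              (S.δ0 k (S.X k ω) - δhat k (S.X k ω))))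
            = (fun ω => (if S.G ω = l then (1:ℝ) else 0) *
            (πhat g k (S.X k ω) / πhat l k (S.X k ω) * What l k (S.X k ω) *
              (S.δ0 k (S.X k ω) - δhat k (S.X k ω)))) := funext fun ω => by ring
        rw [assoc1, prop]
        refine integral_congr_ae (Filter.Eventually.of_forall fun ω => ?_)
        have hne : S.π l k (S.X k ω) ≠ 0 :=
          ne_of_gt (lt_of_lt_of_le S.ηpos (S.πmem l k (S.X k ω)).1)
        rw [hb g k, hb l k]
        field_simp
      rw [Finset.sum_congr rfl perl2]
      have intW : ∀ l, Integrable (fun ω => S.π g k (S.X k ω) *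
          (What l k (S.X k ω) * (S.δ0 k (S.X k ω) - δhat k (S.X k ω)))) S.μ := by
        intro l
        obtain ⟨C, hC⟩ := bddWhat l k
        refine ibm _ _ ((S.measπ g k).comp (S.measX k)) ⟨1, fun ω => ?_⟩
          (ibm _ _ ((measWhat l k).comp (S.measX k)) ⟨C, fun ω => hC _⟩
            ((intδ0X k).sub (intδX k)))
        rw [abs_of_pos (lt_of_lt_of_le S.ηpos (S.πmem g k (S.X k ω)).1)]
        exact (S.πmem g k (S.X k ω)).2
      rw [← integral_finset_sum _ fun l _ => intW l]
      have e5 : (fun ω => ∑ l ∈ Finset.Icc (k+1) (S.T+1), S.π g k (S.X k ω) *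
          (What l k (S.X k ω) * (S.δ0 k (S.X k ω) - δhat k (S.X k ω))))
          = fun ω => S.π g k (S.X k ω) * (S.δ0 k (S.X k ω) - δhat k (S.X k ω)) := by
        funext ω
        rw [← Finset.mul_sum, ← Finset.sum_mul, Whatsum k (S.X k ω), one_mul]
      rw [e5]
      have bddH2 : ∃ C, ∀ x, |S.δ0 k x - δhat k x| ≤ C := by
        obtain ⟨C0, hC0⟩ := S.bddδ0 k
        obtain ⟨C1, hC1⟩ := bddδhat k
        refine ⟨C0 + C1, fun x => ?_⟩
        have := abs_add_le (S.δ0 k x) (-(δhat k x))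
        simp only [← sub_eq_add_neg, abs_neg] at this
        exact this.trans (add_le_add (hC0 x) (hC1 x))
      have prop2 := S.propensity k hkT g hg (by omega : g ≤ S.T + 1)
        (fun x => S.δ0 k x - δhat k x) ((S.measδ0 k).sub (measδhat k)) bddH2
      exact prop2.symm
  -- assemble
  rw [hfeq, integral_sub (integrable_finset_sum _ fun k _ => intT1 k)
    (integrable_finset_sum _ fun k _ => integrable_finset_sum _ fun l _ => intS k l),
    integral_finset_sum _ fun k _ => intT1 k,
    integral_finset_sum _ fun k _ => integrable_finset_sum _ fun l _ => intS k l]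
  have inner : ∀ k ∈ Finset.Icc g t,
      (∫ ω, ∑ l ∈ Finset.Icc (k+1) (S.T+1), (if S.G ω = l then (1:ℝ) else 0) *
        ((πhat g k (S.X k ω) / πhat l k (S.X k ω) * What l k (S.X k ω)) *
          (S.Yobs k ω - S.Yobs (k-1) ω - δhat k (S.X k ω))) ∂S.μ)
      = ∑ l ∈ Finset.Icc (k+1) (S.T+1), ∫ ω, (if S.G ω = l then (1:ℝ) else 0) *
        ((πhat g k (S.X k ω) / πhat l k (S.X k ω) * What l k (S.X k ω)) *
          (S.Yobs k ω - S.Yobs (k-1) ω - δhat k (S.X k ω))) ∂S.μ :=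
    fun k _ => integral_finset_sum _ fun l _ => intS k l
  rw [Finset.sum_congr rfl inner, Finset.sum_congr rfl key, ← Finset.sum_sub_distrib]
  have iYobsk : ∀ k, Integrable (fun ω => (if S.G ω = g then (1:ℝ) else 0) *
      (S.Yobs k ω - S.Yobs (k-1) ω)) S.μ :=
    fun k => ibm _ _ (measind g) (bddind g)
      ((S.integrable_Yobs k).sub (S.integrable_Yobs (k-1)))
  have iY : ∀ a b, Integrable (fun ω => (if S.G ω = g then (1:ℝ) else 0) * S.Y a b ω) S.μ :=
    fun a b => ibm _ _ (measind g) (bddind g) (S.intY a b)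
  have iYD : ∀ k, Integrable (fun ω => (if S.G ω = g then (1:ℝ) else 0) *
      (S.Y (S.T+1) k ω - S.Y (S.T+1) (k-1) ω)) S.μ :=
    fun k => ibm _ _ (measind g) (bddind g) ((S.intY (S.T+1) k).sub (S.intY (S.T+1) (k-1)))
  have iδh : ∀ k, Integrable (fun ω => (if S.G ω = g then (1:ℝ) else 0) *
      δhat k (S.X k ω)) S.μ := fun k => ibm _ _ (measind g) (bddind g) (intδX k)
  have iδ0 : ∀ k, Integrable (fun ω => (if S.G ω = g then (1:ℝ) else 0) *
      S.δ0 k (S.X k ω)) S.μ := fun k => ibm _ _ (measind g) (bddind g) (intδ0X k)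
  have e8 : ∀ k ∈ Finset.Icc g t,
      ((∫ ω, (if S.G ω = g then (1:ℝ) else 0) *
          (S.Yobs k ω - S.Yobs (k-1) ω - δhat k (S.X k ω)) ∂S.μ)
        - ∫ ω, (if S.G ω = g then (1:ℝ) else 0) *
            (S.δ0 k (S.X k ω) - δhat k (S.X k ω)) ∂S.μ)
      = (∫ ω, (if S.G ω = g then (1:ℝ) else 0) * (S.Yobs k ω - S.Yobs (k-1) ω) ∂S.μ)
        - ∫ ω, (if S.G ω = g then (1:ℝ) else 0) *
            (S.Y (S.T+1) k ω - S.Y (S.T+1) (k-1) ω) ∂S.μ := by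
    intro k hk
    rw [Finset.mem_Icc] at hk
    have hk1 : 1 ≤ k := le_trans hg hk.1
    have hkT : k ≤ S.T := le_trans hk.2 ht
    have s1 : (fun ω => (if S.G ω = g then (1:ℝ) else 0) *
        (S.Yobs k ω - S.Yobs (k-1) ω - δhat k (S.X k ω)))
        = fun ω => (if S.G ω = g then (1:ℝ) else 0) * (S.Yobs k ω - S.Yobs (k-1) ω)
          - (if S.G ω = g then (1:ℝ) else 0) * δhat k (S.X k ω) := funext fun ω => by ring
    have s2 : (fun ω => (if S.G ω = g then (1:ℝ) else 0) *
        (S.δ0 k (S.X k ω) - δhat k (S.X k ω)))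
        = fun ω => (if S.G ω = g then (1:ℝ) else 0) * S.δ0 k (S.X k ω)
          - (if S.G ω = g then (1:ℝ) else 0) * δhat k (S.X k ω) := funext fun ω => by ring
    have ipar := S.parallel k hk1 hkT g hg (by omega) (fun _ => (1:ℝ)) measurable_const
      ⟨1, fun x => by simp⟩
    simp only [mul_one] at ipar
    rw [s1, s2, integral_sub (iYobsk k) (iδh k), integral_sub (iδ0 k) (iδh k), ← ipar]
    ring
  rw [Finset.sum_congr rfl e8, Finset.sum_sub_distrib,
    ← integral_finset_sum _ fun k _ => iYobsk k,
    ← integral_finset_sum _ fun k _ => iYD k]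
  have e9 : (fun ω => ∑ k ∈ Finset.Icc g t, (if S.G ω = g then (1:ℝ) else 0) *
      (S.Yobs k ω - S.Yobs (k-1) ω))
      = fun ω => (if S.G ω = g then (1:ℝ) else 0) * S.Y g t ω
        - (if S.G ω = g then (1:ℝ) else 0) * S.Y g (g-1) ω := by
    funext ω
    rw [← Finset.mul_sum, telescope_sum (fun k => S.Yobs k ω) hg t hgt]
    by_cases hG : S.G ω = g
    · simp only [Setup.Yobs, hG]
      ring
    · simp [hG]
  have e10 : (fun ω => ∑ k ∈ Finset.Icc g t, (if S.G ω = g then (1:ℝ) else 0) *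
      (S.Y (S.T+1) k ω - S.Y (S.T+1) (k-1) ω))
      = fun ω => (if S.G ω = g then (1:ℝ) else 0) * S.Y (S.T+1) t ω
        - (if S.G ω = g then (1:ℝ) else 0) * S.Y (S.T+1) (g-1) ω := by
    funext ω
    rw [← Finset.mul_sum, telescope_sum (fun k => S.Y (S.T+1) k ω) hg t hgt]
    ring
  rw [e9, e10, integral_sub (iY g t) (iY g (g-1)),
    integral_sub (iY (S.T+1) t) (iY (S.T+1) (g-1))]
  have e11 : (∫ ω, (if S.G ω = g then (1:ℝ) else 0) * S.Y g (g-1) ω ∂S.μ)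
      = ∫ ω, (if S.G ω = g then (1:ℝ) else 0) * S.Y (S.T+1) (g-1) ω ∂S.μ := by
    refine integral_congr_ae ?_
    filter_upwards [S.noAnticipation g (g-1) (by omega)] with ω h
    rw [h]
  have e12 : (∫ ω, (if S.G ω = g then (1:ℝ) else 0) * (S.Y g t ω - S.Y (S.T+1) t ω) ∂S.μ)
      = (∫ ω, (if S.G ω = g then (1:ℝ) else 0) * S.Y g t ω ∂S.μ)
        - ∫ ω, (if S.G ω = g then (1:ℝ) else 0) * S.Y (S.T+1) t ω ∂S.μ := by
    have s3 : (fun ω => (if S.G ω = g then (1:ℝ) else 0) * (S.Y g t ω - S.Y (S.T+1) t ω))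
        = fun ω => (if S.G ω = g then (1:ℝ) else 0) * S.Y g t ω
          - (if S.G ω = g then (1:ℝ) else 0) * S.Y (S.T+1) t ω := funext fun ω => by ring
    rw [s3, integral_sub (iY g t) (iY (S.T+1) t)]
  rw [e12]
  linarith [e11]

open ProbabilityTheory

/-- **Strong consistency of the AIVW group-period estimator with fixed doubly
robust working models.** Given i.i.d. copies of the observed data
`(G, (X_t)_t, (Y_t)_t)` and fixed bounded measurable working models
`(δ̂, π̂, Ŵ)` with `Σ_{l=k+1}^{T+1} Ŵ_{l,k} ≡ 1`, such that either the outcome model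
or the propensity model is correctly specified, the cell AIVW estimator
`τ̂_{g,t}^{(n)} = A_n / B_n` converges almost surely to `τ_{g,t}`. -/
theorem aivw_strong_consistency (S : SetupPS Ω 𝒳)
    {Ω' : Type*} [MeasurableSpace Ω'] (μ' : Measure Ω') [IsProbabilityMeasure μ']
    (obs : ℕ → Ω' → ℕ × (ℕ → 𝒳) × (ℕ → ℝ))
    (hindep : iIndepFun obs μ')
    (hident : ∀ i, IdentDistrib (obs i)
      (fun ω => (S.G ω, fun t => S.X t ω, fun t => S.Yobs t ω)) μ' S.μ)
    (δhat : ℕ → 𝒳 → ℝ) (measδhat : ∀ k, Measurable (δhat k))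
    (bddδhat : ∀ k, ∃ C, ∀ x, |δhat k x| ≤ C)
    (ηhat : ℝ) (hηhat : 0 < ηhat)
    (πhat : ℕ → ℕ → 𝒳 → ℝ) (measπhat : ∀ l k, Measurable (πhat l k))
    (πhatmem : ∀ l k x, πhat l k x ∈ Set.Icc ηhat 1)
    (What : ℕ → ℕ → 𝒳 → ℝ) (measWhat : ∀ l k, Measurable (What l k))
    (bddWhat : ∀ l k, ∃ C, ∀ x, |What l k x| ≤ C)
    (Whatsum : ∀ k x, ∑ l ∈ Finset.Icc (k + 1) (S.T + 1), What l k x = 1)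
    (hDR : (∀ k, δhat k = S.δ0 k) ∨ (∀ l k, πhat l k = S.π l k))
    (g t : ℕ) (hg : 1 ≤ g) (hgt : g ≤ t) (ht : t ≤ S.T) (hP : 0 < S.Pg g) :
    ∀ᵐ ω' ∂μ', Filter.Tendsto
      (fun n : ℕ =>
        ((1 / (n : ℝ)) * ∑ i ∈ Finset.range n,
          ((if (obs i ω').1 = g then (1 : ℝ) else 0) *
              ∑ k ∈ Finset.Icc g t,
                ((obs i ω').2.2 k - (obs i ω').2.2 (k - 1) - δhat k ((obs i ω').2.1 k))
            - ∑ k ∈ Finset.Icc g t,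
                (if k < (obs i ω').1 then (1 : ℝ) else 0) *
                  (πhat g k ((obs i ω').2.1 k) / πhat (obs i ω').1 k ((obs i ω').2.1 k)) *
                  What (obs i ω').1 k ((obs i ω').2.1 k) *
                  ((obs i ω').2.2 k - (obs i ω').2.2 (k - 1) - δhat k ((obs i ω').2.1 k))))
        / ((1 / (n : ℝ)) * ∑ i ∈ Finset.range n,
            (if (obs i ω').1 = g then (1 : ℝ) else 0)))
      Filter.atTop (nhds (S.tau g t)) := by
  haveI := S.prob
  -- the numerator score and the denominator indicator as functions of the observed data
  set φ : ℕ × (ℕ → 𝒳) × (ℕ → ℝ) → ℝ := fun p =>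
    (if p.1 = g then (1 : ℝ) else 0) *
        ∑ k ∈ Finset.Icc g t, (p.2.2 k - p.2.2 (k - 1) - δhat k (p.2.1 k))
      - ∑ k ∈ Finset.Icc g t, (if k < p.1 then (1 : ℝ) else 0) *
          (πhat g k (p.2.1 k) / πhat p.1 k (p.2.1 k)) * What p.1 k (p.2.1 k) *
          (p.2.2 k - p.2.2 (k - 1) - δhat k (p.2.1 k)) with hφ
  set ψ : ℕ × (ℕ → 𝒳) × (ℕ → ℝ) → ℝ := fun p => if p.1 = g then (1 : ℝ) else 0 with hψ
  set data : Ω → ℕ × (ℕ → 𝒳) × (ℕ → ℝ) :=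
    fun ω => (S.G ω, fun t => S.X t ω, fun t => S.Yobs t ω) with hdata
  -- measurability
  have measφ : Measurable φ := by
    have hF : Measurable (fun q : ((ℕ → 𝒳) × (ℕ → ℝ)) × ℕ => φ (q.2, q.1)) := by
      apply measurable_from_prod_countable_left
      intro l
      show Measurable fun b : (ℕ → 𝒳) × (ℕ → ℝ) =>
        (if l = g then (1 : ℝ) else 0) *
            ∑ k ∈ Finset.Icc g t, (b.2 k - b.2 (k - 1) - δhat k (b.1 k))
          - ∑ k ∈ Finset.Icc g t, (if k < l then (1 : ℝ) else 0) *
              (πhat g k (b.1 k) / πhat l k (b.1 k)) * What l k (b.1 k) *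
              (b.2 k - b.2 (k - 1) - δhat k (b.1 k))
      have hx : ∀ k, Measurable (fun b : (ℕ → 𝒳) × (ℕ → ℝ) => b.1 k) :=
        fun k => (measurable_pi_apply k).comp measurable_fst
      have hy : ∀ k, Measurable (fun b : (ℕ → 𝒳) × (ℕ → ℝ) => b.2 k) :=
        fun k => (measurable_pi_apply k).comp measurable_snd
      have hD : ∀ k, Measurable (fun b : (ℕ → 𝒳) × (ℕ → ℝ) =>
          b.2 k - b.2 (k - 1) - δhat k (b.1 k)) :=
        fun k => ((hy k).sub (hy (k - 1))).sub ((measδhat k).comp (hx k))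
      refine Measurable.sub ?_ ?_
      · exact measurable_const.mul (Finset.measurable_sum _ fun k _ => hD k)
      · refine Finset.measurable_sum _ fun k _ => ?_
        exact (((measurable_const.mul
          (((measπhat g k).comp (hx k)).div ((measπhat l k).comp (hx k)))).mul
          ((measWhat l k).comp (hx k))).mul (hD k))
    exact hF.comp measurable_swap
  have measψ : Measurable ψ := by
    have : Measurable (fun n : ℕ => if n = g then (1 : ℝ) else 0) := measurable_of_countable _
    exact this.comp measurable_fst
  have measdata : Measurable data :=
    S.measG.prodMk ((measurable_pi_lambda _ fun u => S.measX u).prodMk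
      (measurable_pi_lambda _ fun u => S.measurable_Yobs u))
  -- identification
  obtain ⟨intsc, idsc⟩ := identification_s9 S δhat measδhat bddδhat ηhat hηhat πhat measπhat
    πhatmem What measWhat bddWhat Whatsum hDR g t hg hgt ht
  have intφdata : Integrable (fun ω => φ (data ω)) S.μ := intsc
  have intψdata : Integrable (fun ω => ψ (data ω)) S.μ := by
    refine integrable_of_bdd' (measψ.comp measdata) 1 (fun ω => ?_)
    simp only [hψ, hdata]
    split <;> simp
  have intφdatav : (∫ ω, φ (data ω) ∂S.μ) = S.tau g t * S.Pg g := by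
    have : (∫ ω, φ (data ω) ∂S.μ)
        = ∫ ω, (if S.G ω = g then (1:ℝ) else 0) * (S.Y g t ω - S.Y (S.T+1) t ω) ∂S.μ := idsc
    rw [this, Setup.tau, div_mul_cancel₀ _ (ne_of_gt hP)]
    rfl
  have intψdatav : (∫ ω, ψ (data ω) ∂S.μ) = S.Pg g := rfl
  -- strong law for the numerator
  have idφ : ∀ i : ℕ, IdentDistrib (fun ω' => φ (obs i ω')) (fun ω => φ (data ω)) μ' S.μ :=
    fun i => (hident i).comp measφ
  have idψ : ∀ i : ℕ, IdentDistrib (fun ω' => ψ (obs i ω')) (fun ω => ψ (data ω)) μ' S.μ :=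
    fun i => (hident i).comp measψ
  have hA := strong_law_ae_real (fun i ω' => φ (obs i ω'))
    ((idφ 0).integrable_iff.mpr intφdata)
    (fun i j hij => (hindep.indepFun hij).comp measφ measφ)
    (fun i => (idφ i).trans (idφ 0).symm)
  have hB := strong_law_ae_real (fun i ω' => ψ (obs i ω'))
    ((idψ 0).integrable_iff.mpr intψdata)
    (fun i j hij => (hindep.indepFun hij).comp measψ measψ)
    (fun i => (idψ i).trans (idψ 0).symm)
  rw [show (μ'[fun ω' => φ (obs 0 ω')]) = S.tau g t * S.Pg g from
    (idφ 0).integral_eq.trans intφdatav] at hA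
  rw [show (μ'[fun ω' => ψ (obs 0 ω')]) = S.Pg g from (idψ 0).integral_eq.trans intψdatav] at hB
  filter_upwards [hA, hB] with ω' h1 h2
  have h3 := h1.div h2 (ne_of_gt hP)
  rw [mul_div_cancel_right₀ _ (ne_of_gt hP)] at h3
  refine h3.congr fun n => ?_
  simp only [one_div, inv_mul_eq_div]
  rfl


end StaggeredDiD
end

section
/- A structural additive model with a time-invariant unmeasured confounder implies conditional parallel trends given the history of time-varying covariates: suppose that for each period t the potential outcome under control satisfies Y_t(∞) = f_t(Z, Z_t) + U + ε_t, where f_t is a measurable real-valued function with f_t(Z, Z_t) integrable, U is an integrable real random variable (an unmeasured confounder, arbitrarily dependent on G, Z, and the Z_t's), and the error difference ε_t − ε_{t−1} is integrable, has mean zero, and is independent of the random vector (G, Z, Z_t, Z_{t−1}). Then for every group g and every bounded measurable function h, E[ 1{G=g} h(Z, Z_t, Z_{t−1}) (Y_t(∞) − Y_{t−1}(∞)) ] = E[ 1{G=g} h(Z, Z_t, Z_{t−1}) (f_t(Z, Z_t) − f_{t−1}(Z, Z_{t−1})) ]; in particular, the conditional mean of ΔY_t(∞) given X_t = (Z, Z_t,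 Z_{t−1}) and G = g equals f_t(Z, Z_t) − f_{t−1}(Z, Z_{t−1}), which does not depend on g or on U. -/
open MeasureTheory ProbabilityTheory

/-- **A structural additive model with a time-invariant unmeasured confounder implies
conditional parallel trends given the history of time-varying covariates.** If
`Y_t(∞) = f_t(Z, Z_t) + U + ε_t` and `Y_{t−1}(∞) = f_{t−1}(Z, Z_{t−1}) + U + ε_{t−1}`,
where the error difference `ε_t − ε_{t−1}` is integrable, mean zero, and independent of
`(G, Z, Z_t, Z_{t−1})`, then for every group `g` and every bounded measurable `h`,
`E[1{G=g} h(Z,Z_t,Z_{t−1}) (Y_t(∞) − Y_{t−1}(∞))]`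
`= E[1{G=g} h(Z,Z_t,Z_{t−1}) (f_t(Z,Z_t) − f_{t−1}(Z,Z_{t−1}))]`;
that is, `E{ΔY_t(∞) | Z, Z_t, Z_{t−1}, G = g} = f_t(Z,Z_t) − f_{t−1}(Z,Z_{t−1})`,
which does not depend on `g` or on `U`. -/
theorem structural_model_implies_parallel_trends
    {Ω : Type*} [MeasurableSpace Ω] (μ : Measure Ω) [IsProbabilityMeasure μ]
    {𝒵 : Type*} [MeasurableSpace 𝒵]
    (G : Ω → ℕ) (measG : Measurable G)
    (Z : Ω → 𝒵) (measZ : Measurable Z)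
    (Zc Zp : Ω → ℝ) (measZc : Measurable Zc) (measZp : Measurable Zp)
    (Yc Yp : Ω → ℝ) (intYc : Integrable Yc μ) (intYp : Integrable Yp μ)
    (fc fp : 𝒵 → ℝ → ℝ) (measfc : Measurable fun p : 𝒵 × ℝ => fc p.1 p.2)
    (measfp : Measurable fun p : 𝒵 × ℝ => fp p.1 p.2)
    (intfc : Integrable (fun ω => fc (Z ω) (Zc ω)) μ)
    (intfp : Integrable (fun ω => fp (Z ω) (Zp ω)) μ)
    (U : Ω → ℝ) (intU : Integrable U μ)
    (εc εp : Ω → ℝ)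
    (hYc : ∀ ω, Yc ω = fc (Z ω) (Zc ω) + U ω + εc ω)
    (hYp : ∀ ω, Yp ω = fp (Z ω) (Zp ω) + U ω + εp ω)
    (measε : Measurable fun ω => εc ω - εp ω)
    (intε : Integrable (fun ω => εc ω - εp ω) μ)
    (meanε : ∫ ω, (εc ω - εp ω) ∂μ = 0)
    (indepε : IndepFun (fun ω => εc ω - εp ω)
      (fun ω => (G ω, Z ω, Zc ω, Zp ω)) μ) :
    ∀ (g : ℕ) (h : 𝒵 × ℝ × ℝ → ℝ), Measurable h → (∃ C, ∀ x, |h x| ≤ C) →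
      ∫ ω, (if G ω = g then (1 : ℝ) else 0) * h (Z ω, Zc ω, Zp ω) * (Yc ω - Yp ω) ∂μ
        = ∫ ω, (if G ω = g then (1 : ℝ) else 0) * h (Z ω, Zc ω, Zp ω)
            * (fc (Z ω) (Zc ω) - fp (Z ω) (Zp ω)) ∂μ := by
  intro g h meash hbd
  obtain ⟨C, hC⟩ := hbd
  -- the bounded measurable function of (G, Z, Zc, Zp)
  set φ : ℕ × 𝒵 × ℝ × ℝ → ℝ := fun p => (if p.1 = g then (1 : ℝ) else 0) * h p.2 with hφ
  have measφ : Measurable φ := by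
    have hs : MeasurableSet {p : ℕ × 𝒵 × ℝ × ℝ | p.1 = g} :=
      measurable_fst (measurableSet_singleton g)
    exact (Measurable.ite hs measurable_const measurable_const).mul
      (meash.comp measurable_snd)
  have hφbd : ∀ p, |φ p| ≤ C := by
    intro p
    by_cases hpg : p.1 = g
    · simpa [φ, hpg] using hC p.2
    · simpa [φ, hpg] using (abs_nonneg (h p.2)).trans (hC p.2)
  set V : Ω → ℝ := fun ω => φ (G ω, Z ω, Zc ω, Zp ω) with hV
  have measV : Measurable V :=
    measφ.comp ((measG.prodMk (measZ.prodMk (measZc.prodMk measZp))))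
  have hVbd : ∀ ω, |V ω| ≤ C := fun ω => hφbd _
  have intV : Integrable V μ := by
    apply Integrable.mono' (integrable_const C) measV.aestronglyMeasurable
    exact Filter.Eventually.of_forall hVbd
  set ε : Ω → ℝ := fun ω => εc ω - εp ω with hε
  -- independence of ε and V
  have indepVε : IndepFun ε V μ := indepε.comp measurable_id measφ
  have intVε : Integrable (fun ω => ε ω * V ω) μ := by
    have := (indepVε).integrable_mul intε intV
    exact this
  have key : ∫ ω, ε ω * V ω ∂μ = 0 := by
    have h2 := indepVε.integral_mul_eq_mul_integral intε.aestronglyMeasurable intV.aestronglyMeasurable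
    simpa [Pi.mul_apply, meanε] using h2
  -- integrability of the target integrands
  have intVf : Integrable (fun ω => V ω * (fc (Z ω) (Zc ω) - fp (Z ω) (Zp ω))) μ := by
    apply Integrable.bdd_mul (intfc.sub intfp) measV.aestronglyMeasurable
    exact Filter.Eventually.of_forall (fun ω => (Real.norm_eq_abs _).le.trans (hVbd ω))
  -- rewrite Yc - Yp
  have hdiff : ∀ ω, Yc ω - Yp ω = (fc (Z ω) (Zc ω) - fp (Z ω) (Zp ω)) + ε ω := by
    intro ω; rw [hYc ω, hYp ω, hε]; ring
  calc ∫ ω, (if G ω = g then (1 : ℝ) else 0) * h (Z ω, Zc ω, Zp ω) * (Yc ω - Yp ω) ∂μ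
      = ∫ ω, V ω * (fc (Z ω) (Zc ω) - fp (Z ω) (Zp ω)) + ε ω * V ω ∂μ := by
        apply integral_congr_ae
        filter_upwards with ω
        rw [hdiff ω, hV, hφ]
        ring
    _ = ∫ ω, V ω * (fc (Z ω) (Zc ω) - fp (Z ω) (Zp ω)) ∂μ + ∫ ω, ε ω * V ω ∂μ :=
        integral_add intVf intVε
    _ = ∫ ω, V ω * (fc (Z ω) (Zc ω) - fp (Z ω) (Zp ω)) ∂μ := by rw [key, add_zero]
    _ = ∫ ω, (if G ω = g then (1 : ℝ) else 0) * h (Z ω, Zc ω, Zp ω)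
            * (fc (Z ω) (Zc ω) - fp (Z ω) (Zp ω)) ∂μ := rfl
end

section
/- Weighted-residual representation of the AIVW influence function (Equation (5) of the paper): in the staggered DiD setup with propensity scores, let W_{l,k} : 𝒳 → ℝ be bounded measurable weight functions and let μ⁰_{g,t} : 𝒳 → ℝ be measurable functions satisfying the telescoping relation μ⁰_{g,k}(X_k) − μ⁰_{g,k−1}(X_{k−1}) = δ⁰_k(X_k) almost surely for every g ∈ {1, …, T+1} and k ∈ {1, …, T}. For 1 ≤ g ≤ r ≤ T and t ∈ {0, …, T} define the random variable H^{g,r}_{G,t} = 1{G=g}(1{t=r} − 1{t=g−1}) − Σ_{k=g}^{r} 1{G>k} (π_{g,k}(X_k)/π_{G,k}(X_k)) W_{G,k}(X_k) (1{t=k} − 1{t=k−1}). Then, for every real number τ_{g,r}, the following identity holds almost surely: 1{G=g} Σ_{k=g}^{r} (ΔY_k − δ⁰_k(X_k)) − Σ_{k=g}^{r} 1{G>k} (π_{g,k}(X_k)/π_{G,k}(X_k)) W_{G,k}(X_k) (ΔY_k − δ⁰_k(X_k)) − 1{G=g} τ_{g,r} = Σ_{t=0}^{T} H^{g,r}_{G,t}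 ( Y_t − μ⁰_{G,t}(X_t) − 1{G=g and t=r} τ_{g,r} ). -/
open MeasureTheory Finset


lemma sum_ind {T s : ℕ} (hs : s ≤ T) (F : ℕ → ℝ) :
    ∑ t ∈ Finset.range (T+1), (if t = s then (1:ℝ) else 0) * F t = F s := by
  simp only [ite_mul, one_mul, zero_mul]
  rw [Finset.sum_ite_eq' (Finset.range (T+1)) s F, if_pos (Finset.mem_range.mpr (by omega))]

lemma telesum (f : ℕ → ℝ) (g r : ℕ) (hg : 1 ≤ g) (hgr : g ≤ r) :
    ∑ k ∈ Finset.Icc g r, (f k - f (k-1)) = f r - f (g-1) := by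
  induction r with
  | zero => omega
  | succ n ih =>
    rcases eq_or_lt_of_le hgr with h|h
    · subst h
      rw [Finset.Icc_self, Finset.sum_singleton]
    · have hgn : g ≤ n := by omega
      rw [Finset.sum_Icc_succ_top (by omega), ih hgn]
      simp only [Nat.add_sub_cancel]
      ring

/-- The weight `H^{g,r}_{G,t}` of the weighted-residual representation. -/
noncomputable def Hgr {Ω : Type*} {𝒳 : Type*} (G : Ω → ℕ) (X : ℕ → Ω → 𝒳)
    (π W : ℕ → ℕ → 𝒳 → ℝ) (g r t : ℕ) (ω : Ω) : ℝ :=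
  (if G ω = g then (1 : ℝ) else 0) *
      ((if t = r then (1 : ℝ) else 0) - (if t = g - 1 then (1 : ℝ) else 0))
    - ∑ k ∈ Finset.Icc g r,
        (if k < G ω then (1 : ℝ) else 0) * (π g k (X k ω) / π (G ω) k (X k ω)) *
          W (G ω) k (X k ω) *
          ((if t = k then (1 : ℝ) else 0) - (if t = k - 1 then (1 : ℝ) else 0))

/-- **Weighted-residual representation of the AIVW influence function (Equation (5)).**
If `μ⁰_{g,k}(X_k) − μ⁰_{g,k−1}(X_{k−1}) = δ⁰_k(X_k)` a.s., then for `1 ≤ g ≤ r ≤ T` and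
every real `τ_{g,r}`, almost surely
`1{G=g} Σ_{k=g}^r (ΔY_k − δ⁰_k(X_k)) − Σ_{k=g}^r 1{G>k} (π_{g,k}/π_{G,k}) W_{G,k} (ΔY_k − δ⁰_k(X_k)) − 1{G=g} τ_{g,r}`
`= Σ_{t=0}^T H^{g,r}_{G,t} (Y_t − μ⁰_{G,t}(X_t) − 1{G=g, t=r} τ_{g,r})`. -/
theorem weighted_residual_representation
    {Ω : Type*} [MeasurableSpace Ω] (μ : Measure Ω) [IsProbabilityMeasure μ]
    {𝒳 : Type*} [MeasurableSpace 𝒳]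
    (T : ℕ) (hT : 1 ≤ T)
    (G : Ω → ℕ) (measG : Measurable G) (rangeG : ∀ ω, 1 ≤ G ω ∧ G ω ≤ T + 1)
    (X : ℕ → Ω → 𝒳) (measX : ∀ t, Measurable (X t))
    (Y : ℕ → Ω → ℝ) (measY : ∀ t, Measurable (Y t)) (intY : ∀ t, Integrable (Y t) μ)
    (δ0 : ℕ → 𝒳 → ℝ) (measδ0 : ∀ t, Measurable (δ0 t))
    (bddδ0 : ∀ t, ∃ C, ∀ x, |δ0 t x| ≤ C)
    (η : ℝ) (ηpos : 0 < η)
    (π : ℕ → ℕ → 𝒳 → ℝ) (measπ : ∀ g t, Measurable (π g t))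
    (πmem : ∀ g t x, π g t x ∈ Set.Icc η 1)
    (W : ℕ → ℕ → 𝒳 → ℝ) (measW : ∀ l k, Measurable (W l k))
    (bddW : ∀ l k, ∃ C, ∀ x, |W l k x| ≤ C)
    (μ0 : ℕ → ℕ → 𝒳 → ℝ) (measμ0 : ∀ g t, Measurable (μ0 g t))
    (telescope : ∀ g k, 1 ≤ g → g ≤ T + 1 → 1 ≤ k → k ≤ T →
      ∀ᵐ ω ∂μ, μ0 g k (X k ω) - μ0 g (k - 1) (X (k - 1) ω) = δ0 k (X k ω))
    (g r : ℕ) (hg : 1 ≤ g) (hgr : g ≤ r) (hr : r ≤ T) (τgr : ℝ) :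
    ∀ᵐ ω ∂μ,
      (if G ω = g then (1 : ℝ) else 0) *
          ∑ k ∈ Finset.Icc g r, (Y k ω - Y (k - 1) ω - δ0 k (X k ω))
        - ∑ k ∈ Finset.Icc g r,
            (if k < G ω then (1 : ℝ) else 0) * (π g k (X k ω) / π (G ω) k (X k ω)) *
              W (G ω) k (X k ω) * (Y k ω - Y (k - 1) ω - δ0 k (X k ω))
        - (if G ω = g then (1 : ℝ) else 0) * τgr
      = ∑ t ∈ Finset.range (T + 1),
          Hgr G X π W g r t ω *
            (Y t ω - μ0 (G ω) t (X t ω) - (if G ω = g ∧ t = r then τgr else 0)) := by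
  have htel : ∀ᵐ ω ∂μ, ∀ g' ∈ Finset.Icc 1 (T+1), ∀ k ∈ Finset.Icc g r,
      μ0 g' k (X k ω) - μ0 g' (k - 1) (X (k - 1) ω) = δ0 k (X k ω) := by
    rw [Filter.eventually_all_finset]
    intro g' hg'
    rw [Filter.eventually_all_finset]
    intro k hk
    rw [Finset.mem_Icc] at hg' hk
    exact telescope g' k hg'.1 hg'.2 (by omega) (by omega)
  filter_upwards [htel] with ω hω
  have hGmem : G ω ∈ Finset.Icc 1 (T+1) := Finset.mem_Icc.mpr (rangeG ω)
  set I : ℝ := (if G ω = g then (1 : ℝ) else 0) with hI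
  set c : ℕ → ℝ := fun k =>
    (if k < G ω then (1:ℝ) else 0) * (π g k (X k ω) / π (G ω) k (X k ω)) *
      W (G ω) k (X k ω) with hc
  set R : ℕ → ℝ := fun t => Y t ω - μ0 (G ω) t (X t ω) with hR
  set D : ℕ → ℝ := fun t => if G ω = g ∧ t = r then τgr else 0 with hD
  set F : ℕ → ℝ := fun t => R t - D t with hF
  -- RHS computation
  have hRHS : ∑ t ∈ Finset.range (T + 1),
      Hgr G X π W g r t ω * (Y t ω - μ0 (G ω) t (X t ω) -
        (if G ω = g ∧ t = r then τgr else 0))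
      = I * (F r - F (g-1)) - ∑ k ∈ Finset.Icc g r, c k * (F k - F (k-1)) := by
    have step : ∀ t, Hgr G X π W g r t ω *
        (Y t ω - μ0 (G ω) t (X t ω) - (if G ω = g ∧ t = r then τgr else 0))
        = I * ((if t = r then (1:ℝ) else 0) * F t)
          - I * ((if t = g-1 then (1:ℝ) else 0) * F t)
          - ∑ k ∈ Finset.Icc g r,
              (c k * ((if t = k then (1:ℝ) else 0) * F t)
                - c k * ((if t = k-1 then (1:ℝ) else 0) * F t)) := by
      intro t
      show Hgr G X π W g r t ω * F t = _
      unfold Hgr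
      rw [sub_mul, Finset.sum_mul]
      congr 1
      · ring
      · apply Finset.sum_congr rfl
        intro k _
        show (if k < G ω then (1:ℝ) else 0) * (π g k (X k ω) / π (G ω) k (X k ω)) *
          W (G ω) k (X k ω) * _ * F t = _
        rw [hc]
        ring
    rw [Finset.sum_congr rfl (fun t _ => step t)]
    rw [Finset.sum_sub_distrib, Finset.sum_sub_distrib]
    rw [← Finset.mul_sum, ← Finset.mul_sum]
    rw [sum_ind hr F, sum_ind (by omega : g - 1 ≤ T) F]
    rw [Finset.sum_comm]
    have inner : ∀ k ∈ Finset.Icc g r,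
        ∑ t ∈ Finset.range (T+1),
          (c k * ((if t = k then (1:ℝ) else 0) * F t)
            - c k * ((if t = k-1 then (1:ℝ) else 0) * F t))
        = c k * (F k - F (k-1)) := by
      intro k hk
      rw [Finset.mem_Icc] at hk
      rw [Finset.sum_sub_distrib, ← Finset.mul_sum, ← Finset.mul_sum]
      rw [sum_ind (by omega : k ≤ T) F, sum_ind (by omega : k - 1 ≤ T) F]
      ring
    rw [Finset.sum_congr rfl inner]
    ring
  rw [hRHS]
  -- simplify D values
  have hDg1 : D (g-1) = 0 := by
    rw [hD]; simp only; rw [if_neg]; rintro ⟨_, h⟩; omega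
  have hDr : I * D r = I * τgr := by
    rw [hI, hD]
    by_cases h : G ω = g <;> simp [h]
  have hcD : ∀ k ∈ Finset.Icc g r, c k * D k = 0 ∧ D (k-1) = 0 := by
    intro k hk
    rw [Finset.mem_Icc] at hk
    constructor
    · rw [hD, hc]
      simp only
      by_cases h : G ω = g ∧ k = r
      · rw [if_neg (by omega : ¬ k < G ω)]
        ring
      · rw [if_neg h]; ring
    · rw [hD]; simp only; rw [if_neg]; rintro ⟨_, h⟩; omega
  -- LHS computation
  have hΔ : ∀ k ∈ Finset.Icc g r,
      Y k ω - Y (k-1) ω - δ0 k (X k ω) = R k - R (k-1) := by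
    intro k hk
    have := hω (G ω) hGmem k hk
    rw [hR]
    simp only
    linarith
  rw [Finset.sum_congr rfl hΔ, Finset.sum_congr rfl (fun k hk => by
    rw [hΔ k hk] : ∀ k ∈ Finset.Icc g r,
      (if k < G ω then (1:ℝ) else 0) * (π g k (X k ω) / π (G ω) k (X k ω)) *
        W (G ω) k (X k ω) * (Y k ω - Y (k-1) ω - δ0 k (X k ω))
      = c k * (R k - R (k-1)))]
  rw [telesum R g r hg hgr]
  have hsum : ∑ k ∈ Finset.Icc g r, c k * (F k - F (k-1))
      = ∑ k ∈ Finset.Icc g r, c k * (R k - R (k-1)) := by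
    apply Finset.sum_congr rfl
    intro k hk
    obtain ⟨h1, h2⟩ := hcD k hk
    rw [hF]
    simp only
    rw [h2]
    have : c k * (R k - D k - (R (k-1) - 0)) = c k * (R k - R (k-1)) - c k * D k := by ring
    rw [this, h1, sub_zero]
  rw [hsum]
  have hFr : F r = R r - D r := rfl
  have hFg1 : F (g-1) = R (g-1) - D (g-1) := rfl
  rw [hFr, hFg1, hDg1]
  have : I * (R r - D r - (R (g-1) - 0)) = I * (R r - R (g-1)) - I * D r := by ring
  rw [this, hDr]
  ring
end

section
/- Closed form of the aggregated weight H_{G,t} under inverse probability weights (the AIPW case): for 1 ≤ g ≤ r ≤ T and t ∈ {0, …, T} define H^{g,r}_{G,t} = 1{G=g}(1{t=r} − 1{t=g−1}) − Σ_{k=g}^{r} 1{G>k} (π_{g,k}(X_k)/Σ_{l=k+1}^{T+1} π_{l,k}(X_k)) (1{t=k} − 1{t=k−1}), and set H_{G,t} = Σ_{r=1}^{T} Σ_{g=1}^{r} H^{g,r}_{G,t}. Then, with D_t = 1{G ≤ t} and with the convention that the term indexed by t+1 is zero when t = T, the following identity holds pointwise: H_{G,t} = D_t − (T − G + 1) ·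 1{t = G − 1} − (Σ_{s=1}^{t} π_{s,t}(X_t) / Σ_{s=t+1}^{T+1} π_{s,t}(X_t)) · (T − t + 1) · (1 − D_t) + (Σ_{s=1}^{t+1} π_{s,t+1}(X_{t+1}) / Σ_{s=t+2}^{T+1} π_{s,t+1}(X_{t+1})) · (T − t) · (1 − D_{t+1}). -/
open MeasureTheory Finset

/-- The weight `H^{g,r}_{G,t}` under inverse probability weights (the AIPW case). -/
noncomputable def HgrIPW {Ω : Type*} {𝒳 : Type*} (T : ℕ) (G : Ω → ℕ) (X : ℕ → Ω → 𝒳)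
    (π : ℕ → ℕ → 𝒳 → ℝ) (g r t : ℕ) (ω : Ω) : ℝ :=
  (if G ω = g then (1 : ℝ) else 0) *
      ((if t = r then (1 : ℝ) else 0) - (if t = g - 1 then (1 : ℝ) else 0))
    - ∑ k ∈ Finset.Icc g r,
        (if k < G ω then (1 : ℝ) else 0) *
          (π g k (X k ω) / ∑ l ∈ Finset.Icc (k + 1) (T + 1), π l k (X k ω)) *
          ((if t = k then (1 : ℝ) else 0) - (if t = k - 1 then (1 : ℝ) else 0))

/-- The aggregated weight `H_{G,t} = Σ_{r=1}^T Σ_{g=1}^r H^{g,r}_{G,t}`. -/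
noncomputable def HAgg {Ω : Type*} {𝒳 : Type*} (T : ℕ) (G : Ω → ℕ) (X : ℕ → Ω → 𝒳)
    (π : ℕ → ℕ → 𝒳 → ℝ) (t : ℕ) (ω : Ω) : ℝ :=
  ∑ r ∈ Finset.Icc 1 T, ∑ g ∈ Finset.Icc 1 r, HgrIPW T G X π g r t ω

/-- Purely combinatorial core of the closed-form computation. -/
lemma aggregated_weight_key (T g0 t : ℕ) (hg1 : 1 ≤ g0) (hg2 : g0 ≤ T + 1) (ht : t ≤ T)
    (p : ℕ → ℕ → ℝ) :
    (∑ r ∈ Finset.Icc 1 T, ∑ g ∈ Finset.Icc 1 r,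
      ((if g0 = g then (1 : ℝ) else 0) *
          ((if t = r then (1 : ℝ) else 0) - (if t = g - 1 then (1 : ℝ) else 0))
        - ∑ k ∈ Finset.Icc g r,
            (if k < g0 then (1 : ℝ) else 0) *
              (p g k / ∑ l ∈ Finset.Icc (k + 1) (T + 1), p l k) *
              ((if t = k then (1 : ℝ) else 0) - (if t = k - 1 then (1 : ℝ) else 0))))
      = (if g0 ≤ t then (1 : ℝ) else 0)
        - ((T : ℝ) - g0 + 1) * (if t = g0 - 1 then (1 : ℝ) else 0)
        - ((∑ s ∈ Finset.Icc 1 t, p s t) / ∑ s ∈ Finset.Icc (t + 1) (T + 1), p s t) *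
            ((T : ℝ) - t + 1) * (1 - if g0 ≤ t then (1 : ℝ) else 0)
        + (if t < T then
            ((∑ s ∈ Finset.Icc 1 (t + 1), p s (t + 1)) /
                ∑ s ∈ Finset.Icc (t + 2) (T + 1), p s (t + 1)) *
              ((T : ℝ) - t) * (1 - if g0 ≤ t + 1 then (1 : ℝ) else 0)
           else 0) := by
  classical
  -- Step 1: split the double sum into the "jump" part and the "weights" part
  have step1 : (∑ r ∈ Finset.Icc 1 T, ∑ g ∈ Finset.Icc 1 r,
      ((if g0 = g then (1 : ℝ) else 0) *
          ((if t = r then (1 : ℝ) else 0) - (if t = g - 1 then (1 : ℝ) else 0))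
        - ∑ k ∈ Finset.Icc g r,
            (if k < g0 then (1 : ℝ) else 0) *
              (p g k / ∑ l ∈ Finset.Icc (k + 1) (T + 1), p l k) *
              ((if t = k then (1 : ℝ) else 0) - (if t = k - 1 then (1 : ℝ) else 0))))
      = (∑ r ∈ Finset.Icc 1 T, if g0 ≤ r then
            ((if t = r then (1 : ℝ) else 0) - (if t = g0 - 1 then (1 : ℝ) else 0)) else 0)
        - ∑ k ∈ Finset.Icc 1 T, ((Finset.Icc k T).card : ℝ) *
            ((if k < g0 then (1 : ℝ) else 0) *
              ((∑ s ∈ Finset.Icc 1 k, p s k) / ∑ l ∈ Finset.Icc (k + 1) (T + 1), p l k) *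
              ((if t = k then (1 : ℝ) else 0) - (if t = k - 1 then (1 : ℝ) else 0))) := by
    simp only [Finset.sum_sub_distrib]
    congr 1
    · refine Finset.sum_congr rfl fun r hr => ?_
      simp only [ite_mul, one_mul, zero_mul]
      rw [Finset.sum_ite_eq]
      simp only [Finset.mem_Icc, hg1, true_and]
    · calc (∑ r ∈ Finset.Icc 1 T, ∑ g ∈ Finset.Icc 1 r, ∑ k ∈ Finset.Icc g r,
              (if k < g0 then (1 : ℝ) else 0) *
                (p g k / ∑ l ∈ Finset.Icc (k + 1) (T + 1), p l k) *
                ((if t = k then (1 : ℝ) else 0) - (if t = k - 1 then (1 : ℝ) else 0)))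
          = ∑ r ∈ Finset.Icc 1 T, ∑ k ∈ Finset.Icc 1 r, ∑ g ∈ Finset.Icc 1 k,
              (if k < g0 then (1 : ℝ) else 0) *
                (p g k / ∑ l ∈ Finset.Icc (k + 1) (T + 1), p l k) *
                ((if t = k then (1 : ℝ) else 0) - (if t = k - 1 then (1 : ℝ) else 0)) := by
            refine Finset.sum_congr rfl fun r _ => ?_
            refine Finset.sum_comm' ?_
            intro x y
            simp only [Finset.mem_Icc]
            omega
        _ = ∑ k ∈ Finset.Icc 1 T, ∑ r ∈ Finset.Icc k T, ∑ g ∈ Finset.Icc 1 k,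
              (if k < g0 then (1 : ℝ) else 0) *
                (p g k / ∑ l ∈ Finset.Icc (k + 1) (T + 1), p l k) *
                ((if t = k then (1 : ℝ) else 0) - (if t = k - 1 then (1 : ℝ) else 0)) := by
            refine Finset.sum_comm' ?_
            intro x y
            simp only [Finset.mem_Icc]
            omega
        _ = ∑ k ∈ Finset.Icc 1 T, ((Finset.Icc k T).card : ℝ) *
              ((if k < g0 then (1 : ℝ) else 0) *
                ((∑ s ∈ Finset.Icc 1 k, p s k) / ∑ l ∈ Finset.Icc (k + 1) (T + 1), p l k) *
                ((if t = k then (1 : ℝ) else 0) - (if t = k - 1 then (1 : ℝ) else 0))) := by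
            refine Finset.sum_congr rfl fun k hk => ?_
            rw [Finset.sum_const, nsmul_eq_mul]
            congr 1
            rw [Finset.sum_div, Finset.mul_sum, Finset.sum_mul]
  rw [step1]
  -- Step 2: evaluate the first sum
  have first : (∑ r ∈ Finset.Icc 1 T, if g0 ≤ r then
        ((if t = r then (1 : ℝ) else 0) - (if t = g0 - 1 then (1 : ℝ) else 0)) else 0)
      = (if g0 ≤ t then (1 : ℝ) else 0)
        - ((T : ℝ) - g0 + 1) * (if t = g0 - 1 then (1 : ℝ) else 0) := by
    have split : ∀ r, (if g0 ≤ r then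
          ((if t = r then (1 : ℝ) else 0) - (if t = g0 - 1 then (1 : ℝ) else 0)) else 0)
        = (if t = r then (if g0 ≤ r then (1 : ℝ) else 0) else 0)
          - (if g0 ≤ r then (if t = g0 - 1 then (1 : ℝ) else 0) else 0) := by
      intro r
      by_cases h1 : g0 ≤ r <;> by_cases h2 : t = r <;> simp [h1, h2]
    simp only [split]
    rw [Finset.sum_sub_distrib, Finset.sum_ite_eq]
    congr 1
    · by_cases hgt : g0 ≤ t
      · have : t ∈ Finset.Icc 1 T := by simp only [Finset.mem_Icc]; omega
        simp [this, hgt]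
      · simp [hgt]
    · have congr1 : (∑ r ∈ Finset.Icc 1 T,
          if g0 ≤ r then (if t = g0 - 1 then (1 : ℝ) else 0) else 0)
        = ∑ r ∈ Finset.Icc 1 T,
          if r ∈ Finset.Icc g0 T then (if t = g0 - 1 then (1 : ℝ) else 0) else 0 := by
        refine Finset.sum_congr rfl fun r hr => ?_
        simp only [Finset.mem_Icc] at hr ⊢
        by_cases h : g0 ≤ r
        · simp [h, hr.2]
        · simp [h]
      have hsub : Finset.Icc 1 T ∩ Finset.Icc g0 T = Finset.Icc g0 T := by
        rw [Finset.inter_eq_right]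
        intro x hx
        simp only [Finset.mem_Icc] at hx ⊢
        omega
      rw [congr1, Finset.sum_ite_mem, hsub, Finset.sum_const, nsmul_eq_mul, Nat.card_Icc]
      have hcast : ((T + 1 - g0 : ℕ) : ℝ) = (T : ℝ) - g0 + 1 := by
        rw [Nat.cast_sub hg2]
        push_cast
        ring
      rw [hcast]
  rw [first]
  -- Step 3: evaluate the second sum
  have second : (∑ k ∈ Finset.Icc 1 T, ((Finset.Icc k T).card : ℝ) *
          ((if k < g0 then (1 : ℝ) else 0) *
            ((∑ s ∈ Finset.Icc 1 k, p s k) / ∑ l ∈ Finset.Icc (k + 1) (T + 1), p l k) *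
            ((if t = k then (1 : ℝ) else 0) - (if t = k - 1 then (1 : ℝ) else 0))))
      = (if t ∈ Finset.Icc 1 T then ((Finset.Icc t T).card : ℝ) *
            ((if t < g0 then (1 : ℝ) else 0) *
              ((∑ s ∈ Finset.Icc 1 t, p s t) / ∑ l ∈ Finset.Icc (t + 1) (T + 1), p l t)) else 0)
        - (if t + 1 ∈ Finset.Icc 1 T then ((Finset.Icc (t + 1) T).card : ℝ) *
            ((if t + 1 < g0 then (1 : ℝ) else 0) *
              ((∑ s ∈ Finset.Icc 1 (t + 1), p s (t + 1)) /
                ∑ l ∈ Finset.Icc (t + 2) (T + 1), p l (t + 1))) else 0) := by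
    have split : ∀ k ∈ Finset.Icc 1 T, ((Finset.Icc k T).card : ℝ) *
          ((if k < g0 then (1 : ℝ) else 0) *
            ((∑ s ∈ Finset.Icc 1 k, p s k) / ∑ l ∈ Finset.Icc (k + 1) (T + 1), p l k) *
            ((if t = k then (1 : ℝ) else 0) - (if t = k - 1 then (1 : ℝ) else 0)))
        = (if t = k then ((Finset.Icc k T).card : ℝ) *
              ((if k < g0 then (1 : ℝ) else 0) *
                ((∑ s ∈ Finset.Icc 1 k, p s k) /
                  ∑ l ∈ Finset.Icc (k + 1) (T + 1), p l k)) else 0)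
          - (if t + 1 = k then ((Finset.Icc k T).card : ℝ) *
              ((if k < g0 then (1 : ℝ) else 0) *
                ((∑ s ∈ Finset.Icc 1 k, p s k) /
                  ∑ l ∈ Finset.Icc (k + 1) (T + 1), p l k)) else 0) := by
      intro k hk
      simp only [Finset.mem_Icc] at hk
      have hind : (if t = k - 1 then (1 : ℝ) else 0) = (if t + 1 = k then (1 : ℝ) else 0) := by
        by_cases h : t + 1 = k
        · have h2 : t = k - 1 := by omega
          rw [if_pos h2, if_pos h]
        · have h2 : ¬ (t = k - 1) := by omega
          rw [if_neg h2, if_neg h]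
      rw [hind]
      by_cases h1 : t = k <;> by_cases h2 : t + 1 = k <;> simp [h1, h2] <;> ring
    rw [Finset.sum_congr rfl split, Finset.sum_sub_distrib, Finset.sum_ite_eq,
      Finset.sum_ite_eq]
  rw [second]
  -- Step 4: identify the remaining pieces with the RHS
  have hBt : (if t ∈ Finset.Icc 1 T then ((Finset.Icc t T).card : ℝ) *
          ((if t < g0 then (1 : ℝ) else 0) *
            ((∑ s ∈ Finset.Icc 1 t, p s t) / ∑ l ∈ Finset.Icc (t + 1) (T + 1), p l t)) else 0)
      = ((∑ s ∈ Finset.Icc 1 t, p s t) / ∑ s ∈ Finset.Icc (t + 1) (T + 1), p s t) *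
          ((T : ℝ) - t + 1) * (1 - if g0 ≤ t then (1 : ℝ) else 0) := by
    by_cases h0 : 1 ≤ t
    · have hmem : t ∈ Finset.Icc 1 T := by simp only [Finset.mem_Icc]; omega
      rw [if_pos hmem, Nat.card_Icc]
      have hle : t ≤ T + 1 := by omega
      rw [Nat.cast_sub hle]
      by_cases hgt : g0 ≤ t
      · have h' : ¬ (t < g0) := by omega
        simp only [h', if_neg, ite_false, hgt, ite_true]
        push_cast
        ring
      · have h' : t < g0 := by omega
        simp only [h', ite_true, hgt, ite_false]
        push_cast
        ring
    · have h0' : t = 0 := by omega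
      have hmem : t ∉ Finset.Icc 1 T := by simp only [Finset.mem_Icc]; omega
      rw [if_neg hmem]
      subst h0'
      simp
  have hBt1 : (if t + 1 ∈ Finset.Icc 1 T then ((Finset.Icc (t + 1) T).card : ℝ) *
          ((if t + 1 < g0 then (1 : ℝ) else 0) *
            ((∑ s ∈ Finset.Icc 1 (t + 1), p s (t + 1)) /
              ∑ l ∈ Finset.Icc (t + 2) (T + 1), p l (t + 1))) else 0)
      = (if t < T then
          ((∑ s ∈ Finset.Icc 1 (t + 1), p s (t + 1)) /
              ∑ s ∈ Finset.Icc (t + 2) (T + 1), p s (t + 1)) *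
            ((T : ℝ) - t) * (1 - if g0 ≤ t + 1 then (1 : ℝ) else 0)
         else 0) := by
    by_cases hlt : t < T
    · have hmem : t + 1 ∈ Finset.Icc 1 T := by simp only [Finset.mem_Icc]; omega
      rw [if_pos hmem, if_pos hlt, Nat.card_Icc]
      have heq : T + 1 - (t + 1) = T - t := by omega
      rw [heq, Nat.cast_sub (le_of_lt hlt)]
      by_cases hgt : g0 ≤ t + 1
      · have h' : ¬ (t + 1 < g0) := by omega
        simp only [h', ite_false, hgt, ite_true]
        ring
      · have h' : t + 1 < g0 := by omega
        simp only [h', ite_true, hgt, ite_false]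
        ring
    · have hmem : t + 1 ∉ Finset.Icc 1 T := by simp only [Finset.mem_Icc]; omega
      rw [if_neg hmem, if_neg hlt]
  rw [hBt, hBt1]
  ring

/-- **Closed form of the aggregated weight `H_{G,t}` in the AIPW case**: with
`D_t = 1{G ≤ t}` (and with the convention that the term indexed by `t+1` is zero
when `t = T`), `H_{G,t} = D_t − (T−G+1) 1{t=G−1}`
`− (Σ_{s=1}^t π_{s,t}(X_t) / Σ_{s=t+1}^{T+1} π_{s,t}(X_t)) (T−t+1) (1−D_t)`
`+ (Σ_{s=1}^{t+1} π_{s,t+1}(X_{t+1}) / Σ_{s=t+2}^{T+1} π_{s,t+1}(X_{t+1})) (T−t) (1−D_{t+1})`. -/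
theorem aggregated_weight_closed_form
    {Ω : Type*} [MeasurableSpace Ω] {𝒳 : Type*} [MeasurableSpace 𝒳]
    (T : ℕ) (hT : 1 ≤ T)
    (G : Ω → ℕ) (measG : Measurable G) (rangeG : ∀ ω, 1 ≤ G ω ∧ G ω ≤ T + 1)
    (X : ℕ → Ω → 𝒳) (measX : ∀ t, Measurable (X t))
    (η : ℝ) (ηpos : 0 < η)
    (π : ℕ → ℕ → 𝒳 → ℝ) (measπ : ∀ g t, Measurable (π g t))
    (πmem : ∀ g t x, π g t x ∈ Set.Icc η 1)
    (t : ℕ) (ht : t ≤ T) (ω : Ω) :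
    HAgg T G X π t ω
      = (if G ω ≤ t then (1 : ℝ) else 0)
        - ((T : ℝ) - G ω + 1) * (if t = G ω - 1 then (1 : ℝ) else 0)
        - ((∑ s ∈ Finset.Icc 1 t, π s t (X t ω)) /
              ∑ s ∈ Finset.Icc (t + 1) (T + 1), π s t (X t ω)) *
            ((T : ℝ) - t + 1) * (1 - if G ω ≤ t then (1 : ℝ) else 0)
        + (if t < T then
            ((∑ s ∈ Finset.Icc 1 (t + 1), π s (t + 1) (X (t + 1) ω)) /
                ∑ s ∈ Finset.Icc (t + 2) (T + 1), π s (t + 1) (X (t + 1) ω)) *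
              ((T : ℝ) - t) * (1 - if G ω ≤ t + 1 then (1 : ℝ) else 0)
           else 0) := by
  obtain ⟨hg1, hg2⟩ := rangeG ω
  unfold HAgg HgrIPW
  exact aggregated_weight_key T (G ω) t hg1 hg2 ht (fun g k => π g k (X k ω))
end
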